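/- arXiv:2401.05938 — 6 statements merged into one kernel-verified Lean document; each statement's English description precedes it below -/
import Mathlib

section
/- For every k-dicritical digraph D and every subset S of its vertices, the number of connected components of D − S is at most (k−1)^{|S|} · 3^{binom(|S|,2)}. -/
/-!
For each component `C` of `D - S` fix `w ∈ C` and a `(k-1)`-dicolouring `φ_C` of `D - w`.
Its signature records the colours of `S` and, for each pair `{u, v} ⊆ S`, whether `φ_C` has
a monochromatic walk `u → v` or `v → u` avoiding `C` (not both: that would be a monochromatic
closed walk in `D - w`). There are `(k-1)^|S| * 3^C(|S|,2)` signatures. If two components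
`C₁ ≠ C₂` share one, colour `C₁` by `φ₂` and the rest by `φ₁`. A monochromatic closed walk
cannot stay inside `C₁`, where `φ₂` is proper, so it splits into excursions through `C₁`
between vertices of `S`. Such an excursion `u → v` is `φ₂`-monochromatic and avoids `C₂`, so
`u ≠ v` and the common signature reroutes it outside `C₁` in colour `φ₁`. This leaves a
`φ₁`-monochromatic closed walk avoiding `w₁`, which is impossible; so `D` would be
`(k-1)`-dicolourable.
-/

/-- A directed cycle of `A` within the set `s`, given by its first vertex `v`
and the list `l` of remaining vertices. Its length (number of vertices/arcs)
is `(v :: l).length`. -/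
def IsCycleOn {V : Type} (A : V → V → Prop) (s : Set V) (v : V) (l : List V) : Prop :=
  (∀ x ∈ v :: l, x ∈ s) ∧ (v :: l).Nodup ∧ List.Chain A v (l ++ [v])

/-- `D[s]` admits a `k`-dicolouring: a colouring with no monochromatic directed cycle. -/
def DicolorableOn {V : Type} (A : V → V → Prop) (s : Set V) (k : ℕ) : Prop :=
  ∃ φ : V → Fin k, ∀ v l, IsCycleOn A s v l → ¬ (∀ x ∈ v :: l, φ x = φ v)

/-- `D[s]` is `k`-dicritical: its dichromatic number is `k` (not `(k-1)`-dicolourable but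
`k`-dicolourable) and removing any vertex or any arc makes it `(k-1)`-dicolourable. -/
def Dicritical {V : Type} (A : V → V → Prop) (s : Set V) (k : ℕ) : Prop :=
  ¬ DicolorableOn A s (k - 1) ∧ DicolorableOn A s k ∧
  (∀ v ∈ s, DicolorableOn A (s \ {v}) (k - 1)) ∧
  (∀ a b, a ∈ s → b ∈ s → A a b →
    DicolorableOn (fun x y => A x y ∧ ¬(x = a ∧ y = b)) s (k - 1))

/-- The number of connected components of the subdigraph induced on `s`
(components of the underlying undirected graph), as the cardinality of the
quotient by the (equivalence closure of the) adjacency relation. -/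
noncomputable def componentCount {V : Type} (A : V → V → Prop) (s : Set V) : ℕ :=
  Nat.card (Quot (fun a b : {v : V // v ∈ s} => A a.1 b.1 ∨ A b.1 a.1))

open Relation

namespace List

theorem exists_nodup_loop_infix_of_not_nodup {α : Type*} :
    ∀ {L : List α}, ¬ L.Nodup → ∃ b m, (b :: m).Nodup ∧ b :: m ++ [b] <:+: L
  | [], h => absurd nodup_nil h
  | x :: L, h => by
    by_cases hL : L.Nodup
    · have hx : x ∈ L := by simpa [nodup_cons, hL] using h
      obtain ⟨q, t, rfl⟩ := append_of_mem hx
      have hq := nodup_append.1 hL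
      refine ⟨x, q, nodup_cons.2 ⟨fun hxq => hq.2.2 x hxq x mem_cons_self rfl, hq.1⟩, ?_⟩
      exact ⟨[], t, by simp⟩
    · obtain ⟨b, m, hnd, hinf⟩ := exists_nodup_loop_infix_of_not_nodup hL
      exact ⟨b, m, hnd, infix_cons hinf⟩

end List

namespace Relation

theorem transGen_iff_exists_isChain {α : Type*} {r : α → α → Prop} {a b : α} :
    TransGen r a b ↔ ∃ l, (a :: l ++ [b]).IsChain r := by
  constructor
  · intro h
    induction h using TransGen.head_induction_on with
    | single h => exact ⟨[], by simpa using h⟩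
    | head hac _ ih =>
      obtain ⟨l, hl⟩ := ih
      exact ⟨_ :: l, List.isChain_cons_cons.2 ⟨hac, hl⟩⟩
  · rintro ⟨l, hl⟩
    induction l generalizing a with
    | nil => exact .single (by simpa using hl)
    | cons c l ih =>
      obtain ⟨hac, hl⟩ := List.isChain_cons_cons.1 hl
      exact .head hac (ih hl)

variable {α : Type*} {R : α → α → Prop} {C : Set α} {x y : α}

def Excursion (R : α → α → Prop) (C : Set α) (u v : α) : Prop :=
  u ∉ C ∧ v ∉ C ∧ ∃ z, ReflTransGen (fun a b => R a b ∧ b ∈ C) u z ∧ R z v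

theorem ReflTransGen.exists_excursions (hx : x ∉ C) (h : ReflTransGen R x y) :
    ∃ z ∉ C, ReflTransGen (Excursion R C) x z ∧
      ReflTransGen (fun a b => R a b ∧ b ∈ C) z y := by
  induction h with
  | refl => exact ⟨x, hx, .refl, .refl⟩
  | @tail y w _ hyw ih =>
    obtain ⟨z, hz, hxz, hzy⟩ := ih
    by_cases hw : w ∈ C
    · exact ⟨z, hz, hxz, hzy.tail ⟨hyw, hw⟩⟩
    · exact ⟨w, hw, hxz.tail ⟨hz, hw, y, hzy, hyw⟩, .refl⟩

theorem TransGen.excursion (hx : x ∉ C) (hy : y ∉ C) (h : TransGen R x y) :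
    TransGen (Excursion R C) x y := by
  obtain ⟨w, hxw, hwy⟩ := TransGen.tail'_iff.1 h
  obtain ⟨z, hz, hxz, hzw⟩ := hxw.exists_excursions hx
  exact TransGen.tail' hxz ⟨hz, hy, w, hzw, hwy⟩

theorem TransGen.inside_or_exists_not_mem (h : TransGen R x y) :
    TransGen (fun a b => R a b ∧ a ∈ C ∧ b ∈ C) x y ∨
      ∃ z ∉ C, ReflTransGen R x z ∧ ReflTransGen R z y := by
  induction h with
  | @single y hxy =>
    by_cases hx : x ∈ C
    · by_cases hy : y ∈ C
      · exact .inl (.single ⟨hxy, hx, hy⟩)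
      · exact .inr ⟨y, hy, .single hxy, .refl⟩
    · exact .inr ⟨x, hx, .refl, .single hxy⟩
  | @tail y w hxy hyw ih =>
    rcases ih with ih | ⟨z, hz, hxz, hzy⟩
    · by_cases hw : w ∈ C
      · obtain ⟨-, -, -, -, hy⟩ := TransGen.tail'_iff.1 ih
        exact .inl (ih.tail ⟨hyw, hy, hw⟩)
      · exact .inr ⟨w, hw, hxy.to_reflTransGen.tail hyw, .refl⟩
    · exact .inr ⟨z, hz, hxz, hzy.tail hyw⟩

theorem not_transGen_self_of_excursion
    (hC : ∀ x, ¬ TransGen (fun a b => R a b ∧ a ∈ C ∧ b ∈ C) x x)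
    (hE : ∀ x, ¬ TransGen (Excursion R C) x x) (x : α) : ¬ TransGen R x x := by
  intro h
  rcases h.inside_or_exists_not_mem with h' | ⟨z, hz, hxz, hzx⟩
  · exact hC x h'
  · exact hE z ((TransGen.trans_right hzx (h.trans_left hxz)).excursion hz hz)

end Relation

open Classical in
noncomputable def orientationCode {α : Type*} (E : α → α → Prop) (p : Sym2 α) : Fin 3 :=
  if E (Quot.out p).1 (Quot.out p).2 then 1 else if E (Quot.out p).2 (Quot.out p).1 then 2 else 0

theorem rel_of_orientationCode_eq {α : Type*} {E E' : α → α → Prop} {u v : α}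
    (h : orientationCode E s(u, v) = orientationCode E' s(u, v)) (hE' : ¬ (E' u v ∧ E' v u))
    (huv : E' u v) : E u v := by
  have hout : s((Quot.out s(u, v)).1, (Quot.out s(u, v)).2) = s(u, v) := Quot.out_eq _
  unfold orientationCode at h
  rcases Sym2.eq_iff.1 hout with ⟨h1, h2⟩ | ⟨h1, h2⟩ <;> rw [h1, h2] at h <;>
    split_ifs at h <;> simp_all

section Dicoloring

variable {V β : Type*}

def MonoArc (A : V → V → Prop) (s : Set V) (φ : V → β) (a b : V) : Prop :=
  A a b ∧ a ∈ s ∧ b ∈ s ∧ φ a = φ b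

def IsDicoloringOn (A : V → V → Prop) (s : Set V) (φ : V → β) : Prop :=
  ∀ x, ¬ TransGen (MonoArc A s φ) x x

variable {A : V → V → Prop} {s t : Set V} {φ φ' : V → β} {a b : V}

theorem MonoArc.of_eqOn (h : MonoArc A s φ a b) (ha : a ∈ t) (hb : b ∈ t)
    (hφ : Set.EqOn φ φ' t) : MonoArc A t φ' a b :=
  ⟨h.1, ha, hb, by rw [← hφ ha, ← hφ hb, h.2.2.2]⟩

theorem mem_of_transGen_monoArc (h : TransGen (MonoArc A s φ) a b) : a ∈ s ∧ b ∈ s := by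
  induction h with
  | single h => exact ⟨h.2.1, h.2.2.1⟩
  | tail _ h ih => exact ⟨ih.1, h.2.2.1⟩

theorem MonoArc.mono (h : MonoArc A s φ a b) (hst : s ⊆ t) : MonoArc A t φ a b :=
  ⟨h.1, hst h.2.1, hst h.2.2.1, h.2.2.2⟩

theorem IsDicoloringOn.mono (h : IsDicoloringOn A t φ) (hst : s ⊆ t) : IsDicoloringOn A s φ :=
  fun x hx => h x (TransGen.mono (fun _ _ h => h.mono hst) x x hx)

theorem isDicoloringOn_piecewise {S C : Set V} {φ₁ φ₂ : V → β} [DecidablePred (· ∈ C)]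
    (hbdry : ∀ x ∈ C, ∀ y ∉ C, A x y ∨ A y x → y ∈ S) (hagree : Set.EqOn φ₁ φ₂ S)
    (h₁ : IsDicoloringOn A Cᶜ φ₁) (h₂ : IsDicoloringOn A (C ∪ S) φ₂)
    (htrans : ∀ u ∈ S, ∀ v ∈ S, u ≠ v →
      TransGen (MonoArc A (C ∪ S) φ₂) u v → TransGen (MonoArc A Cᶜ φ₁) u v) :
    IsDicoloringOn A Set.univ (C.piecewise φ₂ φ₁) := by
  set ψ := C.piecewise φ₂ φ₁
  have hψ₁ : Set.EqOn ψ φ₁ Cᶜ := fun x hx => C.piecewise_eq_of_notMem _ _ hx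
  have hψ₂ : Set.EqOn ψ φ₂ (C ∪ S) := by
    rintro x (hx | hx)
    · exact C.piecewise_eq_of_mem _ _ hx
    · by_cases hxC : x ∈ C
      · exact C.piecewise_eq_of_mem _ _ hxC
      · rw [hψ₁ hxC, hagree hx]
  have hinto : ∀ a b, MonoArc A Set.univ ψ a b ∧ b ∈ C → MonoArc A (C ∪ S) φ₂ a b := by
    rintro a b ⟨hab, hb⟩
    have ha : a ∈ C ∪ S := by
      by_cases haC : a ∈ C
      · exact .inl haC
      · exact .inr (hbdry b hb a haC (.inr hab.1))
    exact hab.of_eqOn ha (.inl hb) hψ₂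
  refine not_transGen_self_of_excursion (C := C) (fun x hx => h₂ x ?_) (fun x hx => h₁ x ?_)
  · exact TransGen.mono (fun a b h => h.1.of_eqOn (.inl h.2.1) (.inl h.2.2) hψ₂) x x hx
  · refine TransGen.lift' id (fun u v h => ?_) x x hx
    obtain ⟨hu, hv, z, huz, hzv⟩ := h
    rcases huz.cases_tail with rfl | ⟨y, -, -, hzC⟩
    · exact .single (hzv.of_eqOn hu hv hψ₁)
    · have hvS : v ∈ S := hbdry z hzC v hv (.inl hzv.1)
      have hwalk : TransGen (MonoArc A (C ∪ S) φ₂) u v :=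
        TransGen.tail' (ReflTransGen.mono hinto _ _ huz) (hzv.of_eqOn (.inl hzC) (.inr hvS) hψ₂)
      have huS : u ∈ S := (mem_of_transGen_monoArc hwalk).1.resolve_left hu
      by_cases huv : u = v
      · exact absurd (huv ▸ hwalk) (h₂ v)
      · exact htrans u huS v hvS huv hwalk

abbrev SignatureSpace (S : Finset V) (β : Type*) : Type _ :=
  (S → β) × ({p : Sym2 S // ¬ p.IsDiag} → Fin 3)

noncomputable def signature (A : V → V → Prop) (S : Finset V) (C : Set V) (φ : V → β) :
    SignatureSpace S β :=
  (fun x => φ x, fun p => orientationCode (fun a b : S => TransGen (MonoArc A Cᶜ φ) a b) p)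

theorem natCard_signatureSpace (S : Finset V) (m : ℕ) :
    Nat.card (SignatureSpace S (Fin m)) =
      m ^ S.card * 3 ^ S.card.choose 2 := by
  classical
  rw [Nat.card_eq_fintype_card, Fintype.card_prod, Fintype.card_fun, Fintype.card_fun,
    Sym2.card_subtype_not_diag]
  simp

theorem isDicoloringOn_of_signature_eq {S : Finset V} {C₁ C₂ : Set V} {φ₁ φ₂ : V → β}
    [DecidablePred (· ∈ C₁)] (hbdry : ∀ x ∈ C₁, ∀ y ∉ C₁, A x y ∨ A y x → y ∈ S)
    (hC₂ : Disjoint C₂ (C₁ ∪ S)) (h₁ : IsDicoloringOn A C₁ᶜ φ₁) (h₂ : IsDicoloringOn A C₂ᶜ φ₂)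
    (hsig : signature A S C₁ φ₁ = signature A S C₂ φ₂) :
    IsDicoloringOn A Set.univ (C₁.piecewise φ₂ φ₁) := by
  have hsub : C₁ ∪ S ⊆ C₂ᶜ := hC₂.subset_compl_left
  refine isDicoloringOn_piecewise hbdry (fun x hx => congrFun (congrArg Prod.fst hsig) ⟨x, hx⟩)
    h₁ (h₂.mono hsub) fun u hu v hv huv h => ?_
  have hcode :
      orientationCode (fun a b : S => TransGen (MonoArc A C₁ᶜ φ₁) a b) s(⟨u, hu⟩, ⟨v, hv⟩) =
        orientationCode (fun a b : S => TransGen (MonoArc A C₂ᶜ φ₂) a b) s(⟨u, hu⟩, ⟨v, hv⟩) :=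
    congrFun (congrArg Prod.snd hsig) ⟨_, by simpa using huv⟩
  have h' : TransGen (MonoArc A C₂ᶜ φ₂) u v := TransGen.mono (fun _ _ h => h.mono hsub) u v h
  exact rel_of_orientationCode_eq (u := (⟨u, hu⟩ : S)) (v := ⟨v, hv⟩) hcode
    (fun h => h₂ u (h.1.trans h.2)) h'

end Dicoloring

section Component

variable {V : Type*} {A : V → V → Prop} {s : Set V}

abbrev Component (A : V → V → Prop) (s : Set V) : Type _ :=
  Quot (fun a b : {v : V // v ∈ s} => A a.1 b.1 ∨ A b.1 a.1)

def Component.support (q : Component A s) : Set V :=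
  {v | ∃ h : v ∈ s, Quot.mk _ ⟨v, h⟩ = q}

theorem Component.support_subset (q : Component A s) : q.support ⊆ s :=
  fun _ hv => hv.1

theorem Component.out_mem_support (q : Component A s) : (Quot.out q).1 ∈ q.support :=
  ⟨(Quot.out q).2, Quot.out_eq q⟩

theorem Component.mem_support_of_adj {q : Component A s} {x y : V} (hx : x ∈ q.support)
    (hy : y ∈ s) (hxy : A x y ∨ A y x) : y ∈ q.support := by
  obtain ⟨-, rfl⟩ := hx
  exact ⟨hy, Quot.sound hxy.symm⟩

theorem Component.disjoint_support {q q' : Component A s} (h : q ≠ q') :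
    Disjoint q.support q'.support :=
  Set.disjoint_left.2 fun _ ⟨_, hq⟩ ⟨_, hq'⟩ => h (hq.symm.trans hq')

end Component

section Dicolorable

variable {V : Type} {A : V → V → Prop} {s : Set V} {m : ℕ}

theorem dicolorableOn_iff :
    DicolorableOn A s m ↔ ∃ φ : V → Fin m, IsDicoloringOn A s φ := by
  refine exists_congr fun φ => ⟨fun h x hx => ?_, fun h v l hcyc hmono => ?_⟩
  · obtain ⟨l, hl⟩ := transGen_iff_exists_isChain.1 hx
    obtain ⟨w, c, hnd, hinf⟩ := List.exists_nodup_loop_infix_of_not_nodup (L := x :: l ++ [x])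
      (by simp [List.nodup_cons])
    have hmem : ∀ y ∈ x :: l ++ [x], y ∈ s ∧ φ y = φ x :=
      hl.induction _ _ (fun _ _ hyz hy => ⟨hyz.2.2.1, hyz.2.2.2 ▸ hy.2⟩)
        fun _ => ⟨(mem_of_transGen_monoArc hx).1, rfl⟩
    have hsub : ∀ y ∈ w :: c, y ∈ s ∧ φ y = φ x := fun y hy =>
      hmem y (hinf.subset (List.mem_append_left _ hy))
    refine h w c ⟨fun y hy => (hsub y hy).1, hnd, (hl.infix hinf).imp fun _ _ h => h.1⟩
      fun y hy => ?_
    rw [(hsub y hy).2, (hsub w List.mem_cons_self).2]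
  · obtain ⟨hs, -, hch⟩ := hcyc
    refine h v (transGen_iff_exists_isChain.2 ⟨l, ?_⟩)
    have hmem : ∀ y ∈ v :: (l ++ [v]), y ∈ v :: l := by simp +contextual [or_comm]
    exact hch.imp_of_mem_imp fun a b ha hb hab =>
      ⟨hab, hs a (hmem a ha), hs b (hmem b hb), by rw [hmono a (hmem a ha), hmono b (hmem b hb)]⟩

theorem Component.exists_isDicoloringOn_compl_support
    (h : ∀ v, DicolorableOn A (Set.univ \ {v}) m) (q : Component A s) :
    ∃ φ : V → Fin m, IsDicoloringOn A q.supportᶜ φ := by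
  obtain ⟨φ, hφ⟩ := dicolorableOn_iff.1 (h (Quot.out q).1)
  refine ⟨φ, hφ.mono ?_⟩
  rw [← Set.compl_eq_univ_diff]
  exact Set.compl_subset_compl.2 (Set.singleton_subset_iff.2 q.out_mem_support)

end Dicolorable

theorem stmt1_general {V : Type} (A : V → V → Prop) (k : ℕ)
    (hcrit : Dicritical A Set.univ k) (S : Finset V) :
    componentCount A {v | v ∉ S} ≤ (k - 1) ^ S.card * 3 ^ Nat.choose S.card 2 := by
  classical
  by_contra! hlt
  have : Finite (Component A {v | v ∉ S}) :=
    Nat.finite_of_card_ne_zero (Nat.zero_lt_of_lt hlt).ne'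
  have := Fintype.ofFinite (Component A {v | v ∉ S})
  choose φ hφ using
    Component.exists_isDicoloringOn_compl_support (s := {v | v ∉ S}) fun v => hcrit.2.2.1 v trivial
  obtain ⟨q₁, q₂, hne, hsig⟩ :=
    Fintype.exists_ne_map_eq_of_card_lt (fun q => signature A S q.support (φ q)) (by
      rw [← Nat.card_eq_fintype_card, ← Nat.card_eq_fintype_card, natCard_signatureSpace]
      exact hlt)
  refine hcrit.1 (dicolorableOn_iff.2
    ⟨_, isDicoloringOn_of_signature_eq ?_ ?_ (hφ q₁) (hφ q₂) hsig⟩)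
  · exact fun x hx y hy hxy => by_contra fun hyS => hy (q₁.mem_support_of_adj hx hyS hxy)
  · exact Set.disjoint_union_right.2 ⟨(Component.disjoint_support hne).symm,
      Set.disjoint_left.2 fun x hx hxS => q₂.support_subset hx hxS⟩

/-- For every `k`-dicritical digraph `D` and every set `S` of vertices, the number of
connected components of `D - S` is at most `(k-1)^{|S|} * 3^{C(|S|,2)}`. -/
theorem stmt1 {V : Type} [Fintype V] (A : V → V → Prop) (k : ℕ)
    (hirr : ∀ v, ¬ A v v) (hcrit : Dicritical A Set.univ k) (S : Finset V) :
    componentCount A {v | v ∉ S} ≤ (k - 1) ^ S.card * 3 ^ Nat.choose S.card 2 :=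
  stmt1_general A k hcrit S
end

section
/- For every integer k ≥ 3, there exist infinitely many k-dicritical digraphs containing no directed path on 3k+1 vertices. -/
variable {V : Type}

def IsDicolouring {K : ℕ} (A : V → V → Prop) (s : Set V) (φ : V → Fin K) : Prop :=
  ∀ v l, IsCycleOn A s v l → ¬ ∀ x ∈ v :: l, φ x = φ v

theorem IsDicolouring.ne_of_digon {K : ℕ} {A : V → V → Prop} {s : Set V} {φ : V → Fin K}
    (hφ : IsDicolouring A s φ) {x y : V} (hx : x ∈ s) (hy : y ∈ s) (hxy : x ≠ y)
    (h₁ : A x y) (h₂ : A y x) : φ x ≠ φ y := fun he =>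
  hφ x [y] ⟨by simp [hx, hy], by simp [hxy], .cons_cons h₁ (.cons_cons h₂ (.singleton x))⟩
    (by simp [he])

theorem IsDicolouring.not_triangle {K : ℕ} {A : V → V → Prop} {s : Set V} {φ : V → Fin K}
    (hφ : IsDicolouring A s φ) {x y z : V} (hx : x ∈ s) (hy : y ∈ s) (hz : z ∈ s)
    (hxy : x ≠ y) (hyz : y ≠ z) (hxz : x ≠ z) (h₁ : A x y) (h₂ : A y z) (h₃ : A z x)
    (hyx : φ y = φ x) (hzx : φ z = φ x) : False :=
  hφ x [y, z] ⟨by simp [hx, hy, hz], by simp [hxy, hyz, hxz],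
    .cons_cons h₁ (.cons_cons h₂ (.cons_cons h₃ (.singleton x)))⟩
    (by simp [hyx, hzx])

theorem DicolorableOn.of_potential {A : V → V → Prop} {s : Set V} {K : ℕ} (hK : 0 < K)
    (c f : V → ℕ) (hc : ∀ x ∈ s, c x < K)
    (hf : ∀ x y, x ∈ s → y ∈ s → A x y → c x = c y → f y < f x) :
    DicolorableOn A s K := by
  refine ⟨fun x => ⟨c x % K, Nat.mod_lt _ hK⟩, ?_⟩
  rintro v l ⟨hs, -, hcycle⟩ hmono
  have hcv : ∀ x ∈ v :: l, c x = c v := fun x hx => by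
    have hx' := congrArg Fin.val (hmono x hx)
    simp only at hx'
    rwa [Nat.mod_eq_of_lt (hc x (hs x hx)), Nat.mod_eq_of_lt (hc v (hs v (by simp)))] at hx'
  have hmem : ∀ x ∈ v :: (l ++ [v]), x ∈ v :: l := by simp [or_comm]
  have hdesc : List.IsChain (fun x y => f y < f x) (v :: (l ++ [v])) :=
    List.IsChain.imp_of_mem_imp (fun x y hx hy hxy => hf x y (hs x (hmem x hx))
      (hs y (hmem y hy)) hxy ((hcv x (hmem x hx)).trans (hcv y (hmem y hy)).symm)) hcycle
  have hlt := List.pairwise_cons.1 ((List.isChain_map f (R := (· > ·))).2 hdesc).pairwise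
  exact lt_irrefl _ (hlt.1 (f v) (by simp))

theorem DicolorableOn.comap {W : Type} {A : V → V → Prop} {s : Set V} {K : ℕ}
    (h : DicolorableOn A s K) (e : W → V) (he : e.Injective) :
    DicolorableOn (fun x y => A (e x) (e y)) (e ⁻¹' s) K := by
  obtain ⟨φ, hφ⟩ := h
  refine ⟨φ ∘ e, fun v l ⟨hs, hnodup, hcycle⟩ hmono => hφ (e v) (l.map e) ⟨?_, ?_, ?_⟩ ?_⟩
  · simpa using hs
  · simpa using hnodup.map he
  · have := (List.isChain_map e).2 hcycle
    simp only [List.map_cons, List.map_append, List.map_nil] at this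
    exact this
  · simpa using hmono

theorem Dicritical.comap_equiv {W : Type} {A : V → V → Prop} {s : Set V} {k : ℕ}
    (h : Dicritical A s k) (e : W ≃ V) :
    Dicritical (fun x y => A (e x) (e y)) (e ⁻¹' s) k := by
  obtain ⟨hnot, hcol, hvertex, harc⟩ := h
  refine ⟨fun h' => hnot ?_, hcol.comap e e.injective, fun v hv => ?_, fun a b ha hb hab => ?_⟩
  · simpa using h'.comap e.symm e.symm.injective
  · simpa [Set.preimage_sdiff, ← Set.image_singleton, e.injective.preimage_image]
      using (hvertex (e v) hv).comap e e.injective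
  · simpa using (harc (e a) (e b) ha hb hab).comap e e.injective

theorem apply_two_mul_eq_apply_zero {α : Type*} {a b : α} {g : ℕ → α} {j : ℕ}
    (hg : ∀ i ≤ 2 * j, g i = a ∨ g i = b) (hne : ∀ i < 2 * j, g i ≠ g (i + 1)) :
    g (2 * j) = g 0 := by
  induction j with
  | zero => rfl
  | succ j ih =>
    have h₀ := hg (2 * j) (by omega)
    have h₁ := hg (2 * j + 1) (by omega)
    have h₂ := hg (2 * j + 2) (by omega)
    have hne₀ := hne (2 * j) (by omega)
    have hne₁ := hne (2 * j + 1) (by omega)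
    have : g (2 * j + 2) = g (2 * j) := by
      rcases h₀ with h₀ | h₀ <;> rcases h₁ with h₁ | h₁ <;> rcases h₂ with h₂ | h₂ <;>
        simp_all
    rw [show 2 * (j + 1) = 2 * j + 2 by ring, this]
    exact ih (fun i hi => hg i (by omega)) (fun i hi => hne i (by omega))

namespace HubCycle

abbrev Vertex (h n : ℕ) := Fin h ⊕ Fin n

/-- `inl i` is the `i`-th hub and `inr v` the `v`-th cycle vertex. -/
def Adj (h n : ℕ) : Vertex h n → Vertex h n → Prop
  | .inl i, .inl j => i ≠ j
  | .inl i, .inr v => 2 ≤ i.val ∨ v.val % 2 = 0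
  | .inr v, .inl i => 2 ≤ i.val ∨ v.val % 2 = 1
  | .inr v, .inr w => v.val % 2 = 0 ∧ (w.val = v.val + 1 ∨ v.val = w.val + 1) ∨
      v.val = 0 ∧ w.val = n - 1 ∨ v.val = n - 1 ∧ w.val = 0

/-- Colours the cycle vertices alternately, except that `u - 1` and `u` get the same colour. -/
def cutParity (u v : ℕ) : ℕ := if v < u then v % 2 else (v + 1) % 2

variable {h n : ℕ}

lemma adj_irrefl (hn : 2 ≤ n) (x : Vertex h n) : ¬ Adj h n x x := by
  rcases x with i | v <;> simp [Adj]; omega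

theorem injective_colour_inl {K : ℕ} {φ : Vertex h n → Fin K}
    (hφ : IsDicolouring (Adj h n) Set.univ φ) : Function.Injective (φ ∘ Sum.inl) := by
  intro i j hij
  by_contra hne
  exact hφ.ne_of_digon trivial trivial (by simpa using hne) (by simpa [Adj] using hne)
    (by simpa [Adj] using Ne.symm hne) hij

theorem colour_inr_eq_or (hh : 2 ≤ h) {φ : Vertex h n → Fin h}
    (hφ : IsDicolouring (Adj h n) Set.univ φ) (v : Fin n) :
    φ (.inr v) = φ (.inl ⟨0, by omega⟩) ∨ φ (.inr v) = φ (.inl ⟨1, by omega⟩) := by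
  obtain ⟨i, hi⟩ := (Finite.injective_iff_surjective.1 (injective_colour_inl hφ)) (φ (.inr v))
  by_cases h2 : 2 ≤ i.val
  · exact absurd hi (hφ.ne_of_digon trivial trivial (by simp) (by simp [Adj, h2])
      (by simp [Adj, h2]))
  · have : i = ⟨0, by omega⟩ ∨ i = ⟨1, by omega⟩ := by simp only [Fin.ext_iff]; omega
    rcases this with h0 | h0 <;> rw [h0] at hi
    exacts [.inl hi.symm, .inr hi.symm]

theorem colour_inr_ne_of_adj (hh : 2 ≤ h) (hn : 2 ≤ n) {φ : Vertex h n → Fin h}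
    (hφ : IsDicolouring (Adj h n) Set.univ φ) {v w : Fin n} (hvw : Adj h n (.inr v) (.inr w)) :
    φ (.inr v) ≠ φ (.inr w) := by
  intro hc
  have hvw' := hvw
  simp only [Adj] at hvw'
  rcases hvw' with ⟨hv, hw⟩ | hd | hd
  · obtain ⟨i, hi, hr⟩ : ∃ i : Fin h, i.val < 2 ∧ φ (.inr v) = φ (.inl i) := by
      rcases colour_inr_eq_or hh hφ v with hr | hr
      exacts [⟨_, by simp, hr⟩, ⟨_, by simp, hr⟩]
    exact hφ.not_triangle trivial trivial trivial (by simp) (by simp; omega) (by simp)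
      (by simp [Adj]; omega) hvw (by simp [Adj]; omega) hr (hc.symm.trans hr)
  all_goals
    exact hφ.ne_of_digon trivial trivial (by simp; omega) hvw (by simp [Adj]; omega) hc

theorem not_dicolorableOn_univ (hh : 2 ≤ h) (hn : 3 ≤ n) (hodd : n % 2 = 1) :
    ¬ DicolorableOn (Adj h n) Set.univ h := by
  rintro ⟨φ, hφ : IsDicolouring _ _ φ⟩
  let g : ℕ → Fin h := fun i => if hi : i < n then φ (.inr ⟨i, hi⟩) else φ (.inl ⟨0, by omega⟩)
  have hg : g (2 * (n / 2)) = g 0 := by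
    refine apply_two_mul_eq_apply_zero (a := φ (.inl ⟨0, by omega⟩))
      (b := φ (.inl ⟨1, by omega⟩)) (fun i hi => ?_) fun i hi => ?_
    · simp only [g, dif_pos (show i < n by omega)]
      exact colour_inr_eq_or hh hφ _
    · simp only [g, dif_pos (show i < n by omega), dif_pos (show i + 1 < n by omega)]
      rcases Nat.even_or_odd i with ⟨j, hj⟩ | ⟨j, hj⟩
      · exact colour_inr_ne_of_adj hh (by omega) hφ (by simp [Adj]; omega)
      · exact (colour_inr_ne_of_adj hh (by omega) hφ (by simp [Adj]; omega)).symm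
  simp only [g, dif_pos (show 2 * (n / 2) < n by omega), dif_pos (show 0 < n by omega)] at hg
  exact colour_inr_ne_of_adj hh (by omega) hφ (by simp [Adj]; omega) hg

theorem dicolorableOn_univ (hh : 2 ≤ h) (hn : 2 ≤ n) :
    DicolorableOn (Adj h n) Set.univ (h + 1) := by
  refine DicolorableOn.of_potential (by omega)
    (Sum.elim (fun i => i.val) fun v => if v.val = n - 1 then h else v.val % 2)
    (Sum.elim (fun _ => 1) fun v => if v.val % 2 = 1 then 2 else 0) ?_ ?_
  · rintro (i | v) - <;> simp only [Sum.elim_inl, Sum.elim_inr] <;> (try split_ifs) <;> omega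
  · rintro (i | v) (j | w) - - hA hc <;>
      simp only [Adj, Sum.elim_inl, Sum.elim_inr] at hA hc ⊢ <;> (try split_ifs at hc ⊢) <;> omega

theorem dicolorableOn_univ_diff_singleton (hh : 2 ≤ h) (hn : 3 ≤ n) (hodd : n % 2 = 1)
    (x : Vertex h n) : DicolorableOn (Adj h n) (Set.univ \ {x}) h := by
  rcases x with r | u
  · by_cases hr : 2 ≤ r.val
    · refine DicolorableOn.of_potential (by omega)
        (Sum.elim (fun i => i.val) fun v => if v.val = n - 1 then r.val else v.val % 2)
        (Sum.elim (fun _ => 1) fun v => if v.val % 2 = 1 then 2 else 0) ?_ ?_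
      · rintro (i | v) - <;>
          simp only [Sum.elim_inl, Sum.elim_inr] <;> (try split_ifs) <;> omega
      · rintro (i | v) (j | w) hy hz hA hc <;>
          simp only [Adj, Sum.elim_inl, Sum.elim_inr, Set.mem_sdiff, Set.mem_univ, true_and,
            Set.mem_singleton_iff, Sum.inl.injEq, reduceCtorEq, not_false_eq_true]
            at hy hz hA hc ⊢ <;> (try split_ifs at hc ⊢) <;> omega
    · refine DicolorableOn.of_potential (by omega)
        (Sum.elim (fun i => if i.val = 1 then 0 else i.val) fun v => if v.val = 0 then 0 else 1)
        (Sum.elim (fun _ => 2) fun v => if v.val % 2 = 0 ∧ v.val ≠ 0 then 1 else 0) ?_ ?_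
      · rintro (i | v) - <;>
          simp only [Sum.elim_inl, Sum.elim_inr] <;> (try split_ifs) <;> omega
      · rintro (i | v) (j | w) hy hz hA hc <;>
          simp only [Adj, Sum.elim_inl, Sum.elim_inr, Set.mem_sdiff, Set.mem_univ, true_and,
            Set.mem_singleton_iff, Sum.inl.injEq, reduceCtorEq, not_false_eq_true]
            at hy hz hA hc ⊢ <;> (try split_ifs at hc ⊢) <;> omega
  · refine DicolorableOn.of_potential (by omega)
      (Sum.elim (fun i => i.val) fun v => cutParity u v.val)
      (Sum.elim (fun _ => 1) fun v => if v.val % 2 = 1 then 2 else 0) ?_ ?_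
    · rintro (i | v) - <;>
        simp only [cutParity, Sum.elim_inl, Sum.elim_inr] <;> (try split_ifs) <;> omega
    · rintro (i | v) (j | w) hy hz hA hc <;>
        simp only [Adj, cutParity, Sum.elim_inl, Sum.elim_inr, Set.mem_sdiff, Set.mem_univ,
          true_and, Set.mem_singleton_iff, Sum.inr.injEq, reduceCtorEq, not_false_eq_true]
          at hy hz hA hc ⊢ <;> (try split_ifs at hc ⊢) <;> omega

-- One end of the deleted arc joins the colour class of the other; the colour freed this way
-- resolves the odd cycle.
theorem dicolorableOn_deleteArc_inl_inl (hn : 3 ≤ n) (hodd : n % 2 = 1)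
    (i₀ j₀ : Fin h) (hij : i₀ ≠ j₀) :
    DicolorableOn (fun x y => Adj h n x y ∧ ¬(x = .inl i₀ ∧ y = .inl j₀)) Set.univ h := by
  by_cases hi : 2 ≤ i₀.val <;> by_cases hj : 2 ≤ j₀.val
  · refine DicolorableOn.of_potential (by omega)
      (Sum.elim (fun l => if l = j₀ then i₀.val else l.val)
        fun v => if v.val = n - 1 then j₀.val else v.val % 2)
      (Sum.elim (fun l => if l = j₀ then 5 else if l = i₀ then 4 else 1)
        fun v => if v.val % 2 = 1 then 2 else 0) ?_ ?_
    · rintro (i | v) - <;>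
        simp only [Sum.elim_inl, Sum.elim_inr] <;> (try split_ifs) <;> omega
    · rintro (i | v) (j | w) - - hA hc <;>
        simp only [Adj, Sum.elim_inl, Sum.elim_inr, Sum.inl.injEq,
          reduceCtorEq, false_and, and_false, not_false_eq_true, and_true] at hA hc ⊢ <;>
        (try split_ifs at hc ⊢) <;> omega
  · refine DicolorableOn.of_potential (by omega)
      (Sum.elim (fun l => if l = j₀ then i₀.val else l.val)
        fun v => (cutParity 1 v.val + j₀.val) % 2)
      (Sum.elim (fun l => if l = j₀ then 5 else if l = i₀ then 4 else 2)
        fun v => if v.val % 2 = 0 then 1 else 0) ?_ ?_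
    · rintro (i | v) - <;>
        simp only [cutParity, Sum.elim_inl, Sum.elim_inr] <;> (try split_ifs) <;> omega
    · rintro (i | v) (j | w) - - hA hc <;>
        simp only [Adj, cutParity, Sum.elim_inl, Sum.elim_inr, Sum.inl.injEq,
          reduceCtorEq, false_and, and_false, not_false_eq_true, and_true] at hA hc ⊢ <;>
        (try split_ifs at hc ⊢) <;> omega
  · refine DicolorableOn.of_potential (by omega)
      (Sum.elim (fun l => if l = i₀ then j₀.val else l.val)
        fun v => (cutParity 1 v.val + i₀.val) % 2)
      (Sum.elim (fun l => if l = j₀ then 5 else if l = i₀ then 4 else 2)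
        fun v => if v.val % 2 = 0 then 1 else 0) ?_ ?_
    · rintro (i | v) - <;>
        simp only [cutParity, Sum.elim_inl, Sum.elim_inr] <;> (try split_ifs) <;> omega
    · rintro (i | v) (j | w) - - hA hc <;>
        simp only [Adj, cutParity, Sum.elim_inl, Sum.elim_inr, Sum.inl.injEq,
          reduceCtorEq, false_and, and_false, not_false_eq_true, and_true] at hA hc ⊢ <;>
        (try split_ifs at hc ⊢) <;> omega
  · refine DicolorableOn.of_potential (by omega)
      (Sum.elim (fun l => if l.val < 2 then 0 else l.val) fun v => if v.val = 0 then 0 else 1)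
      (Sum.elim (fun l => if l = j₀ then 5 else if l = i₀ then 4 else 1)
        fun v => if v.val % 2 = 0 ∧ v.val ≠ 0 then 1 else 0) ?_ ?_
    · rintro (i | v) - <;>
        simp only [Sum.elim_inl, Sum.elim_inr] <;> (try split_ifs) <;> omega
    · rintro (i | v) (j | w) - - hA hc <;>
        simp only [Adj, Sum.elim_inl, Sum.elim_inr, Sum.inl.injEq,
          reduceCtorEq, false_and, and_false, not_false_eq_true, and_true] at hA hc ⊢ <;>
        (try split_ifs at hc ⊢) <;> omega

-- Here and in the next lemma the cycle vertex takes the colour of the hub, and the 2-colouring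
-- of the cycle is cut open next to it.
theorem dicolorableOn_deleteArc_inl_inr (hh : 2 ≤ h) (hn : 3 ≤ n) (hodd : n % 2 = 1)
    (i₀ : Fin h) (w₀ : Fin n) (hiw : Adj h n (.inl i₀) (.inr w₀)) :
    DicolorableOn (fun x y => Adj h n x y ∧ ¬(x = .inl i₀ ∧ y = .inr w₀)) Set.univ h := by
  simp only [Adj] at hiw
  by_cases hi : 2 ≤ i₀.val
  · refine DicolorableOn.of_potential (by omega)
      (Sum.elim (fun l => l.val) fun v => if v = w₀ then i₀.val else cutParity w₀ v.val)
      (Sum.elim (fun l => if l = i₀ then 4 else 1)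
        fun v => if v = w₀ then 5 else if v.val % 2 = 1 then 2 else 0) ?_ ?_
    · rintro (i | v) - <;>
        simp only [cutParity, Sum.elim_inl, Sum.elim_inr] <;> (try split_ifs) <;> omega
    · rintro (i | v) (j | w) - - hA hc <;>
        simp only [Adj, cutParity, Sum.elim_inl, Sum.elim_inr, Sum.inl.injEq, Sum.inr.injEq,
          reduceCtorEq, false_and, and_false, not_false_eq_true, and_true] at hA hc ⊢ <;>
        (try split_ifs at hc ⊢) <;> omega
  by_cases hw : w₀.val = n - 1
  · refine DicolorableOn.of_potential (by omega)
      (Sum.elim (fun l => l.val) fun v => (cutParity (n - 1) v.val + 1 + i₀.val) % 2)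
      (Sum.elim (fun _ => 1) fun v => if v = w₀ then 3 else if v.val % 2 = 1 then 2 else 0) ?_ ?_
    · rintro (i | v) - <;>
        simp only [cutParity, Sum.elim_inl, Sum.elim_inr] <;> (try split_ifs) <;> omega
    · rintro (i | v) (j | w) - - hA hc <;>
        simp only [Adj, cutParity, Sum.elim_inl, Sum.elim_inr, Sum.inl.injEq, Sum.inr.injEq,
          reduceCtorEq, false_and, and_false, not_false_eq_true, and_true] at hA hc ⊢ <;>
        (try split_ifs at hc ⊢) <;> omega
  · refine DicolorableOn.of_potential (by omega)
      (Sum.elim (fun l => l.val) fun v => (cutParity (w₀.val + 1) v.val + i₀.val) % 2)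
      (Sum.elim (fun _ => 1) fun v => if v = w₀ then 3 else if v.val % 2 = 1 then 2 else 0) ?_ ?_
    · rintro (i | v) - <;>
        simp only [cutParity, Sum.elim_inl, Sum.elim_inr] <;> (try split_ifs) <;> omega
    · rintro (i | v) (j | w) - - hA hc <;>
        simp only [Adj, cutParity, Sum.elim_inl, Sum.elim_inr, Sum.inl.injEq, Sum.inr.injEq,
          reduceCtorEq, false_and, and_false, not_false_eq_true, and_true] at hA hc ⊢ <;>
        (try split_ifs at hc ⊢) <;> omega

theorem dicolorableOn_deleteArc_inr_inl (hh : 2 ≤ h) (hn : 3 ≤ n) (hodd : n % 2 = 1)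
    (v₀ : Fin n) (j₀ : Fin h) (hvj : Adj h n (.inr v₀) (.inl j₀)) :
    DicolorableOn (fun x y => Adj h n x y ∧ ¬(x = .inr v₀ ∧ y = .inl j₀)) Set.univ h := by
  simp only [Adj] at hvj
  by_cases hj : 2 ≤ j₀.val
  · refine DicolorableOn.of_potential (by omega)
      (Sum.elim (fun l => l.val) fun v => if v = v₀ then j₀.val else cutParity v₀ v.val)
      (Sum.elim (fun l => if l = j₀ then 5 else 1)
        fun v => if v = v₀ then 4 else if v.val % 2 = 1 then 2 else 0) ?_ ?_
    · rintro (i | v) - <;>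
        simp only [cutParity, Sum.elim_inl, Sum.elim_inr] <;> (try split_ifs) <;> omega
    · rintro (i | v) (j | w) - - hA hc <;>
        simp only [Adj, cutParity, Sum.elim_inl, Sum.elim_inr, Sum.inl.injEq, Sum.inr.injEq,
          reduceCtorEq, false_and, and_false, not_false_eq_true, and_true] at hA hc ⊢ <;>
        (try split_ifs at hc ⊢) <;> omega
  · refine DicolorableOn.of_potential (by omega)
      (Sum.elim (fun l => l.val) fun v => (cutParity (v₀.val + 1) v.val + 1 + j₀.val) % 2)
      (Sum.elim (fun _ => 4) fun v =>
        if v = v₀ then 2 else if v.val = v₀.val + 1 then 3 else if v.val % 2 = 1 then 5 else 0)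
      ?_ ?_
    · rintro (i | v) - <;>
        simp only [cutParity, Sum.elim_inl, Sum.elim_inr] <;> (try split_ifs) <;> omega
    · rintro (i | v) (j | w) - - hA hc <;>
        simp only [Adj, cutParity, Sum.elim_inl, Sum.elim_inr, Sum.inl.injEq, Sum.inr.injEq,
          reduceCtorEq, false_and, and_false, not_false_eq_true, and_true] at hA hc ⊢ <;>
        (try split_ifs at hc ⊢) <;> omega

-- The 2-colouring of the cycle is cut open at the deleted arc.
theorem dicolorableOn_deleteArc_inr_inr (hh : 2 ≤ h) (hodd : n % 2 = 1)
    (v₀ w₀ : Fin n) (hvw : Adj h n (.inr v₀) (.inr w₀)) :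
    DicolorableOn (fun x y => Adj h n x y ∧ ¬(x = .inr v₀ ∧ y = .inr w₀)) Set.univ h := by
  simp only [Adj] at hvw
  rcases hvw with ⟨hv, hw | hw⟩ | hvw | hvw
  · refine DicolorableOn.of_potential (by omega)
      (Sum.elim (fun l => l.val) fun v => cutParity w₀ v.val)
      (Sum.elim (fun _ => 2) fun v => if v.val % 2 = 1 then 3 else 1) ?_ ?_
    · rintro (i | v) - <;>
        simp only [cutParity, Sum.elim_inl, Sum.elim_inr] <;> (try split_ifs) <;> omega
    · rintro (i | v) (j | w) - - hA hc <;>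
        simp only [Adj, cutParity, Sum.elim_inl, Sum.elim_inr, Sum.inr.injEq,
          reduceCtorEq, false_and, and_false, not_false_eq_true, and_true] at hA hc ⊢ <;>
        (try split_ifs at hc ⊢) <;> omega
  · refine DicolorableOn.of_potential (by omega)
      (Sum.elim (fun l => l.val) fun v => cutParity v₀ v.val)
      (Sum.elim (fun _ => 2) fun v => if v.val % 2 = 1 then 3 else 1) ?_ ?_
    · rintro (i | v) - <;>
        simp only [cutParity, Sum.elim_inl, Sum.elim_inr] <;> (try split_ifs) <;> omega
    · rintro (i | v) (j | w) - - hA hc <;>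
        simp only [Adj, cutParity, Sum.elim_inl, Sum.elim_inr, Sum.inr.injEq,
          reduceCtorEq, false_and, and_false, not_false_eq_true, and_true] at hA hc ⊢ <;>
        (try split_ifs at hc ⊢) <;> omega
  all_goals
    refine DicolorableOn.of_potential (by omega)
      (Sum.elim (fun l => l.val) fun v => v.val % 2)
      (Sum.elim (fun l => if l.val = 0 then 3 else 0)
        fun v => if v.val % 2 = 1 then 1 else if v = w₀ then 2 else if v = v₀ then 1 else 0) ?_ ?_
    · rintro (i | v) - <;> simp only [Sum.elim_inl, Sum.elim_inr] <;> omega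
    · rintro (i | v) (j | w) - - hA hc <;>
        simp only [Adj, Sum.elim_inl, Sum.elim_inr, Sum.inr.injEq,
          reduceCtorEq, false_and, and_false, not_false_eq_true, and_true] at hA hc ⊢ <;>
        (try split_ifs at hc ⊢) <;> omega

def slack : Vertex h n → ℕ
  | .inl _ => 0
  | .inr v => 2 - v.val % 2

def hubCount (l : List (Vertex h n)) : ℕ := (l.filterMap Sum.getLeft?).length

def ContainsDigon (l : List (Vertex h n)) : Prop :=
  (∃ v : Fin n, v.val = 0 ∧ .inr v ∈ l) ∧ ∃ v : Fin n, v.val = n - 1 ∧ .inr v ∈ l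

@[simp] lemma slack_inl (i : Fin h) : slack (n := n) (.inl i) = 0 := rfl

@[simp] lemma slack_inr (v : Fin n) : slack (h := h) (.inr v) = 2 - v.val % 2 := rfl

@[simp] lemma hubCount_cons_inl (i : Fin h) (l : List (Vertex h n)) :
    hubCount (.inl i :: l) = hubCount l + 1 := by
  simp [hubCount]

@[simp] lemma hubCount_cons_inr (v : Fin n) (l : List (Vertex h n)) :
    hubCount (.inr v :: l) = hubCount l := by
  simp [hubCount, List.filterMap_cons]

lemma slack_le (x : Vertex h n) : slack x ≤ 2 := by
  rcases x with _ | _ <;> simp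

lemma hubCount_le {l : List (Vertex h n)} (hl : l.Nodup) : hubCount l ≤ h := by
  simpa [hubCount] using (hl.filterMap (f := Sum.getLeft?) fun a a' b hb hb' => by
    rcases a with _ | _ <;> rcases a' with _ | _ <;> simp_all).length_le_card

lemma ContainsDigon.cons {l : List (Vertex h n)} (hl : ContainsDigon l) (x : Vertex h n) :
    ContainsDigon (x :: l) := by
  obtain ⟨⟨v, hv, hvl⟩, w, hw, hwl⟩ := hl
  exact ⟨⟨v, hv, .tail x hvl⟩, w, hw, .tail x hwl⟩

lemma containsDigon_of_adj_of_even {v w : Fin n} {t : List (Vertex h n)}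
    (hvw : Adj h n (.inr v) (.inr w)) (hw : w.val % 2 = 0) (hnd : (.inr v :: .inr w :: t).Nodup) :
    ContainsDigon (.inr v :: .inr w :: t) ∧ ¬ ContainsDigon (.inr w :: t) := by
  simp only [Adj] at hvw
  have hends : v.val = 0 ∧ w.val = n - 1 ∨ v.val = n - 1 ∧ w.val = 0 := by omega
  refine ⟨?_, fun ⟨⟨a, ha, hal⟩, b, hb, hbl⟩ => (List.nodup_cons.1 hnd).1 ?_⟩
  · rcases hends with ⟨hv, hw⟩ | ⟨hv, hw⟩
    · exact ⟨⟨v, hv, by simp⟩, w, hw, by simp⟩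
    · exact ⟨⟨w, hw, by simp⟩, v, hv, by simp⟩
  · rcases hends with ⟨hv, -⟩ | ⟨hv, -⟩
    · rwa [show v = a from Fin.ext (by omega)]
    · rwa [show v = b from Fin.ext (by omega)]

open Classical in
/-- Each hub accounts for itself and the at most two cycle vertices following it, `slack x`
bounds the run of cycle vertices starting at `x`, and the digon can lengthen one run by one. -/
theorem length_le_of_isChain (hodd : n % 2 = 1) (x : Vertex h n) (t : List (Vertex h n))
    (hnd : (x :: t).Nodup) (hch : (x :: t).IsChain (Adj h n)) :
    (x :: t).length ≤
      3 * hubCount (x :: t) + slack x + if ContainsDigon (x :: t) then 1 else 0 := by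
  induction t generalizing x with
  | nil => rcases x with _ | v <;> simp <;> omega
  | cons y t ih =>
    have ih := ih y hnd.of_cons (List.isChain_cons_cons.1 hch).2
    have hxy := (List.isChain_cons_cons.1 hch).1
    have hmono : (if ContainsDigon (y :: t) then 1 else 0) ≤
        if ContainsDigon (x :: y :: t) then 1 else 0 := by
      split_ifs with h₁ h₂ <;> first | omega | exact absurd (h₁.cons x) h₂
    have hslack := slack_le y
    rcases x with i | v
    · simp only [hubCount_cons_inl, List.length_cons, slack_inl] at ih ⊢
      omega
    rcases y with j | w
    · simp only [Adj, hubCount_cons_inr, List.length_cons, slack_inl, slack_inr] at ih hxy ⊢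
      omega
    have hv : v.val % 2 = 0 := by simp only [Adj] at hxy; omega
    by_cases hw : w.val % 2 = 1
    · simp only [hubCount_cons_inr, List.length_cons, slack_inr] at ih ⊢
      omega
    obtain ⟨hdigon, hnot⟩ := containsDigon_of_adj_of_even hxy (by omega) hnd
    simp only [hubCount_cons_inr, List.length_cons, slack_inr, if_pos hdigon, if_neg hnot] at ih ⊢
    omega

theorem length_le_of_nodup_isChain (hodd : n % 2 = 1) {l : List (Vertex h n)} (hnd : l.Nodup)
    (hch : l.IsChain (Adj h n)) : l.length ≤ 3 * (h + 1) := by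
  classical
  rcases l with _ | ⟨x, t⟩
  · simp
  have hlen := length_le_of_isChain hodd x t hnd hch
  have hhub := hubCount_le hnd
  have hslack := slack_le x
  split_ifs at hlen <;> omega

theorem dicritical (hh : 2 ≤ h) (hn : 3 ≤ n) (hodd : n % 2 = 1) :
    Dicritical (Adj h n) Set.univ (h + 1) := by
  refine ⟨not_dicolorableOn_univ hh hn hodd, dicolorableOn_univ hh (by omega),
    fun x _ => dicolorableOn_univ_diff_singleton hh hn hodd x, ?_⟩
  rintro (i | v) (j | w) - - hxy
  · exact dicolorableOn_deleteArc_inl_inl hn hodd i j hxy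
  · exact dicolorableOn_deleteArc_inl_inr hh hn hodd i w hxy
  · exact dicolorableOn_deleteArc_inr_inl hh hn hodd v j hxy
  · exact dicolorableOn_deleteArc_inr_inr hh hodd v w hxy

end HubCycle

/-- For every `k ≥ 3` there are infinitely many `k`-dicritical digraphs containing
no directed path on `3k+1` vertices. -/
theorem stmt3 (k : ℕ) (hk : 3 ≤ k) :
    ∀ N : ℕ, ∃ n : ℕ, N < n ∧ ∃ A : Fin n → Fin n → Prop,
      (∀ v, ¬ A v v) ∧ Dicritical A Set.univ k ∧
      ¬ ∃ l : List (Fin n), l.Nodup ∧ l.Chain' A ∧ l.length = 3 * k + 1 := by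
  obtain ⟨h, rfl⟩ : ∃ h, k = h + 1 := ⟨k - 1, by omega⟩
  intro N
  let e : Fin h ⊕ Fin (2 * N + 3) ≃ Fin (h + (2 * N + 3)) := finSumFinEquiv
  refine ⟨h + (2 * N + 3), by omega, fun x y => HubCycle.Adj h (2 * N + 3) (e.symm x) (e.symm y),
    fun x => HubCycle.adj_irrefl (by omega) _, ?_, ?_⟩
  · simpa using (HubCycle.dicritical (by omega) (by omega) (by omega)).comap_equiv e.symm
  · rintro ⟨l, hnd, hch, hlen⟩
    have := HubCycle.length_le_of_nodup_isChain (by omega) (hnd.map e.symm.injective)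
      ((List.isChain_map e.symm).2 hch)
    simp only [List.length_map] at this
    omega
end

section
/- The digraph D_{3,n} (for odd n ≥ 3) constructed from an antidirected path P = (p_1,...,p_n) with d⁺(p_1)=1, by adding the digon [p_1,p_n], two vertices x_1, x_2 joined by a digon, and for every arc uv of P the arcs v x_i and x_i u for i ∈ {1,2}, has dichromatic number at least 3. -/
/-- The arcs of the antidirected path `P = (p_0, …, p_{n-1})` in which vertices with even
index are the sources (so `p_0` has out-degree 1): there is an arc from `p_i` to `p_j`
iff `i` is even and `|i - j| = 1`. -/
def antiPath (n : ℕ) (i j : Fin n) : Prop :=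
  Even i.val ∧ (j.val = i.val + 1 ∨ i.val = j.val + 1)

/-- The digraph `D_{3,n}`: the antidirected path `P` on the vertices `Sum.inl i`
(`i : Fin n`), the digon `[p_0, p_{n-1}]`, two vertices `x_1, x_2` (the `Sum.inr`
vertices) joined by a digon, and for every arc `uv` of `P`, the arcs `v xᵢ` and
`xᵢ u` for `i ∈ {1,2}`. -/
def D3 (n : ℕ) : (Fin n ⊕ Fin 2) → (Fin n ⊕ Fin 2) → Prop
  | Sum.inl i, Sum.inl j =>
      antiPath n i j ∨ (i.val = 0 ∧ j.val = n - 1) ∨ (i.val = n - 1 ∧ j.val = 0)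
  | Sum.inr a, Sum.inr b => a ≠ b
  | Sum.inl j, Sum.inr _ => ∃ i, antiPath n i j
  | Sum.inr _, Sum.inl i => ∃ j, antiPath n i j

/-- For odd `n ≥ 3`, the digraph `D_{3,n}` has dichromatic number at least 3,
i.e. it is not 2-dicolourable. -/
theorem stmt4 (n : ℕ) (hodd : Odd n) (hn : 3 ≤ n) :
    ¬ DicolorableOn (D3 n) Set.univ 2 := by
  rintro ⟨φ, hφ⟩
  have two : ∀ a b c : Fin 2, a ≠ b → b ≠ c → a = c := by decide
  have pick : ∀ a b c : Fin 2, a ≠ b → c = a ∨ c = b := by decide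
  -- the digon on x₁, x₂
  have hx : φ (Sum.inr 0 : Fin n ⊕ Fin 2) ≠ φ (Sum.inr 1) := by
    intro h
    refine hφ (Sum.inr 0) [Sum.inr 1] ⟨fun x _ => Set.mem_univ x, ?_, ?_⟩ ?_
    · simp
    · refine List.Chain.cons ?_ (List.Chain.cons ?_ List.Chain.nil)
      · show (0 : Fin 2) ≠ 1; decide
      · show (1 : Fin 2) ≠ 0; decide
    · intro x hx
      simp only [List.mem_cons, List.not_mem_nil, or_false] at hx
      rcases hx with rfl | rfl <;> simp_all
  -- triangles through xᵢ force the endpoints of every path arc to differ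
  have htri : ∀ i j : Fin n, antiPath n i j → φ (Sum.inl i) ≠ φ (Sum.inl j) := by
    intro i j hij heq
    obtain ⟨x, hxc⟩ : ∃ x : Fin 2, φ (Sum.inr x : Fin n ⊕ Fin 2) = φ (Sum.inl i) := by
      rcases pick _ _ (φ (Sum.inl i)) hx with h | h
      · exact ⟨0, h.symm⟩
      · exact ⟨1, h.symm⟩
    have hne : i ≠ j := by
      rcases hij with ⟨_, h | h⟩ <;>
        · intro h'; rw [h'] at h; omega
    refine hφ (Sum.inl i) [Sum.inl j, Sum.inr x] ⟨fun x _ => Set.mem_univ x, ?_, ?_⟩ ?_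
    · simp [hne]
    · refine List.Chain.cons ?_ (List.Chain.cons ?_ (List.Chain.cons ?_ List.Chain.nil))
      · exact Or.inl hij
      · exact ⟨i, hij⟩
      · exact ⟨j, hij⟩
    · intro y hy
      simp only [List.mem_cons, List.not_mem_nil, or_false] at hy
      rcases hy with rfl | rfl | rfl <;> simp_all
  -- consecutive path vertices get different colours
  have hadj : ∀ k (hk : k + 1 < n),
      φ (Sum.inl (⟨k, by omega⟩ : Fin n)) ≠ φ (Sum.inl ⟨k + 1, hk⟩) := by
    intro k hk
    rcases Nat.even_or_odd k with he | ho
    · exact htri ⟨k, by omega⟩ ⟨k + 1, hk⟩ ⟨he, Or.inl rfl⟩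
    · exact (htri ⟨k + 1, hk⟩ ⟨k, by omega⟩ ⟨ho.add_one, Or.inr rfl⟩).symm
  have pe : ∀ (k k' : ℕ) (h : k < n) (h' : k' < n), k = k' →
      φ (Sum.inl (⟨k, h⟩ : Fin n)) = φ (Sum.inl ⟨k', h'⟩) := by
    rintro k _ h _ rfl; rfl
  -- colours repeat with period 2 along the path
  have hstep : ∀ m (h : 2 * m < n),
      φ (Sum.inl (⟨2 * m, h⟩ : Fin n)) = φ (Sum.inl ⟨0, by omega⟩) := by
    intro m
    induction m with
    | zero => intro h; exact pe _ _ _ _ rfl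
    | succ m ih =>
      intro h
      have h1 := hadj (2 * m) (by omega)
      have h2 := hadj (2 * m + 1) (by omega)
      calc φ (Sum.inl (⟨2 * (m + 1), h⟩ : Fin n))
          = φ (Sum.inl (⟨2 * m + 1 + 1, by omega⟩ : Fin n)) := pe _ _ _ _ (by ring)
        _ = φ (Sum.inl (⟨2 * m, by omega⟩ : Fin n)) := ((two _ _ _ h1 h2)).symm
        _ = φ (Sum.inl ⟨0, by omega⟩) := ih (by omega)
  obtain ⟨m, hm⟩ := hodd
  have hlast : φ (Sum.inl (⟨n - 1, by omega⟩ : Fin n)) = φ (Sum.inl ⟨0, by omega⟩) := by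
    calc φ (Sum.inl (⟨n - 1, by omega⟩ : Fin n))
        = φ (Sum.inl (⟨2 * m, by omega⟩ : Fin n)) := pe _ _ _ _ (by omega)
      _ = φ (Sum.inl ⟨0, by omega⟩) := hstep m (by omega)
  -- the digon on p₀, p_{n-1} gives the contradiction
  refine hφ (Sum.inl ⟨0, by omega⟩) [Sum.inl ⟨n - 1, by omega⟩]
    ⟨fun x _ => Set.mem_univ x, ?_, ?_⟩ ?_
  · simp only [List.nodup_cons, List.mem_singleton, List.nodup_nil, List.not_mem_nil,
      not_false_iff, and_true]
    intro h
    have := Sum.inl.inj h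
    have : (0 : ℕ) = n - 1 := congrArg Fin.val this
    omega
  · refine List.Chain.cons ?_ (List.Chain.cons ?_ List.Chain.nil)
    · exact Or.inr (Or.inl ⟨rfl, rfl⟩)
    · exact Or.inr (Or.inr ⟨rfl, rfl⟩)
  · intro y hy
    simp only [List.mem_cons, List.not_mem_nil, or_false] at hy
    rcases hy with rfl | rfl
    · rfl
    · exact hlast
end

section
/- For digraphs F_1 and F_2, mader_χ⃗(F_1 + F_2) ≤ mader_χ⃗(F_1) + mader_χ⃗(F_2), where F_1 + F_2 denotes the disjoint union. -/
/-- The digraph `A` contains a subdivision of the digraph `B`: there are branch vertices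
`f u` (injectively) and, for each arc `(u,v)` of `B`, a directed path from `f u` to `f v`
whose internal vertices `p u v` are pairwise distinct, avoid all branch vertices, and are
disjoint from the internal vertices of the paths of all other arcs. -/
def ContainsSubdivision {W V : Type} (B : W → W → Prop) (A : V → V → Prop) : Prop :=
  ∃ (f : W → V) (p : W → W → List V),
    Function.Injective f ∧
    (∀ u v, B u v → List.Chain A (f u) (p u v ++ [f v])) ∧
    (∀ u v, B u v → (f u :: (p u v ++ [f v])).Nodup) ∧
    (∀ u v, B u v → ∀ x ∈ p u v, ∀ w : W, x ≠ f w) ∧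
    (∀ u v u' v', B u v → B u' v' → (u, v) ≠ (u', v') → ∀ x ∈ p u v, x ∉ p u' v')

/-- The dichromatic number of the digraph `A`. -/
noncomputable def dichromaticNumber {V : Type} (A : V → V → Prop) : ℕ :=
  sInf {k | DicolorableOn A Set.univ k}

/-- `c` is a Mader bound for `B`: every (finite, loopless) digraph with dichromatic number
at least `c` contains a subdivision of `B`. -/
def IsMaderBound {W : Type} (B : W → W → Prop) (c : ℕ) : Prop :=
  ∀ (n : ℕ) (A : Fin n → Fin n → Prop), (∀ v, ¬ A v v) →
    c ≤ dichromaticNumber A → ContainsSubdivision B A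

/-- `mader_χ⃗(B)`: the least `c` such that every digraph with dichromatic number at least
`c` contains a subdivision of `B`. -/
noncomputable def maderChi {W : Type} (B : W → W → Prop) : ℕ :=
  sInf {c | IsMaderBound B c}

/-- The disjoint union of two digraphs. -/
def sumRel {W₁ W₂ : Type} (B₁ : W₁ → W₁ → Prop) (B₂ : W₂ → W₂ → Prop) :
    W₁ ⊕ W₂ → W₁ ⊕ W₂ → Prop
  | Sum.inl a, Sum.inl b => B₁ a b
  | Sum.inr a, Sum.inr b => B₂ a b
  | _, _ => False


/-!
If `χ⃗(D) ≥ c₁ + c₂`, take `X` inclusion-minimal with `χ⃗(D[X]) ≥ c₁`. Deleting a vertex of `X`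
drops the dichromatic number below `c₁`, and adding it back costs at most one colour, so
`D[X]` is `c₁`-dicolourable; since `χ⃗` is subadditive over `V = X ∪ Xᶜ`, this forces
`χ⃗(D[Xᶜ]) ≥ c₂`. Then `D[X]` and `D[Xᶜ]` contain subdivisions of `F₁` and `F₂`, which are
vertex-disjoint and so together form a subdivision of `F₁ + F₂`.
-/

open Set

section Dicolouring

variable {V V' : Type} {A : V → V → Prop} {A' : V' → V' → Prop}

theorem IsCycleOn.map {s : Set V} {t : Set V'} {v : V} {l : List V} (g : V → V')
    (hinj : InjOn g s) (hmaps : MapsTo g s t) (hhom : ∀ x ∈ s, ∀ y ∈ s, A x y → A' (g x) (g y))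
    (hc : IsCycleOn A s v l) : IsCycleOn A' t (g v) (l.map g) := by
  obtain ⟨hmem, hnodup, hchain⟩ := hc
  refine ⟨?_, ?_, ?_⟩
  · simpa only [← List.map_cons, List.forall_mem_map] using fun x hx => hmaps (hmem x hx)
  · rw [← List.map_cons]
    exact hnodup.map_on fun x hx y hy => hinj (hmem x hx) (hmem y hy)
  · have hmem' : ∀ x ∈ v :: (l ++ [v]), x ∈ s := fun x hx =>
      hmem x (by simp only [List.mem_cons, List.mem_append] at hx ⊢; tauto)
    have hchain' := (List.isChain_map g (R := A')).2 <| hchain.imp_of_mem_imp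
      fun x y hx hy hxy => hhom x (hmem' x hx) y (hmem' y hy) hxy
    rw [List.map_cons, List.map_append, List.map_singleton] at hchain'
    exact hchain'

theorem IsCycleOn.rel_self_of_forall_eq {s : Set V} {v : V} {l : List V}
    (hc : IsCycleOn A s v l) (hl : ∀ x ∈ l, x = v) : A v v := by
  obtain ⟨-, hnodup, hchain⟩ := hc
  obtain rfl : l = [] := List.eq_nil_iff_forall_not_mem.mpr fun x hx =>
    (List.nodup_cons.mp hnodup).1 (hl x hx ▸ hx)
  exact List.isChain_pair.mp hchain

theorem DicolorableOn.comap_s6 {s : Set V} {t : Set V'} {k : ℕ} (g : V → V')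
    (hinj : InjOn g s) (hmaps : MapsTo g s t) (hhom : ∀ x ∈ s, ∀ y ∈ s, A x y → A' (g x) (g y))
    (h : DicolorableOn A' t k) : DicolorableOn A s k := by
  obtain ⟨φ, hφ⟩ := h
  refine ⟨φ ∘ g, fun v l hc hmono => hφ (g v) (l.map g) (hc.map g hinj hmaps hhom) ?_⟩
  rw [← List.map_cons, List.forall_mem_map]
  exact hmono

theorem DicolorableOn.subset {s t : Set V} {k : ℕ} (h : DicolorableOn A t k) (hst : s ⊆ t) :
    DicolorableOn A s k :=
  h.comap_s6 id (injOn_id s) hst fun _ _ _ _ => id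

theorem DicolorableOn.mono {s : Set V} {k k' : ℕ} (h : DicolorableOn A s k) (hk : k ≤ k') :
    DicolorableOn A s k' := by
  obtain ⟨φ, hφ⟩ := h
  exact ⟨Fin.castLE hk ∘ φ, fun v l hc hmono =>
    hφ v l hc fun x hx => Fin.castLE_injective hk (hmono x hx)⟩

theorem dicolorableOn_of_injOn (hA : ∀ v, ¬ A v v) {s : Set V} {k : ℕ} (φ : V → Fin k)
    (hφ : InjOn φ s) : DicolorableOn A s k :=
  ⟨φ, fun v _ hc hmono => hA v <| hc.rel_self_of_forall_eq fun x hx =>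
    have hx' := List.mem_cons_of_mem v hx
    hφ (hc.1 x hx') (hc.1 v List.mem_cons_self) (hmono x hx')⟩

theorem DicolorableOn.union {s t : Set V} {k₁ k₂ : ℕ} (h₁ : DicolorableOn A s k₁)
    (h₂ : DicolorableOn A t k₂) : DicolorableOn A (s ∪ t) (k₁ + k₂) := by
  classical
  obtain ⟨φ₁, hφ₁⟩ := h₁
  obtain ⟨φ₂, hφ₂⟩ := h₂
  refine ⟨fun x => if x ∈ s then Fin.castAdd k₂ (φ₁ x) else Fin.natAdd k₁ (φ₂ x),
    fun v l hc hmono => ?_⟩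
  have hside : ∀ x ∈ v :: l, (x ∈ s ↔ v ∈ s) := by
    intro x hx
    have := hmono x hx
    by_cases hxs : x ∈ s <;> by_cases hvs : v ∈ s <;> simp_all [Fin.ext_iff]
    all_goals omega
  by_cases hvs : v ∈ s
  · refine hφ₁ v l ⟨fun x hx => (hside x hx).2 hvs, hc.2⟩ fun x hx => ?_
    simpa [(hside x hx).2 hvs, hvs] using hmono x hx
  · refine hφ₂ v l
      ⟨fun x hx => (hc.1 x hx).resolve_left fun h => hvs ((hside x hx).1 h), hc.2⟩ fun x hx => ?_
    simpa [mt (hside x hx).1 hvs, hvs] using hmono x hx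

end Dicolouring

section DichromaticAtLeast

variable {V : Type} {A : V → V → Prop}

/-- `c ≤ χ⃗(D[s])`. The nonemptiness clause is needed because a colouring `V → Fin 0` exists
only for empty `V`, so `DicolorableOn A ∅ 0` fails whenever `V` is nonempty. -/
def DichromaticAtLeast (A : V → V → Prop) (s : Set V) (c : ℕ) : Prop :=
  (c ≠ 0 → s.Nonempty) ∧ ∀ k < c, ¬ DicolorableOn A s k

theorem DichromaticAtLeast.mono {s : Set V} {c c' : ℕ} (h : DichromaticAtLeast A s c)
    (hc : c' ≤ c) : DichromaticAtLeast A s c' :=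
  ⟨fun hc' => h.1 (by omega), fun k hk => h.2 k (by omega)⟩

theorem dichromaticAtLeast_univ_of_le {c : ℕ} (h : c ≤ dichromaticNumber A) :
    DichromaticAtLeast A univ c := by
  have hcol : ∀ k < c, ¬ DicolorableOn A univ k := fun k hk hk' =>
    (h.trans (Nat.sInf_le hk')).not_gt hk
  refine ⟨fun hc => ?_, hcol⟩
  by_contra hV
  rw [not_nonempty_iff_eq_empty, univ_eq_empty_iff] at hV
  exact hcol 0 (by omega) ⟨isEmptyElim, fun v => isEmptyElim v⟩

theorem DichromaticAtLeast.exists_dicolorableOn [Finite V] (hA : ∀ v, ¬ A v v) {c : ℕ}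
    (hc : c ≠ 0) (h : DichromaticAtLeast A univ c) :
    ∃ X, DichromaticAtLeast A X c ∧ DicolorableOn A X c := by
  obtain ⟨X, hX⟩ := exists_minimal_of_wellFoundedLT (DichromaticAtLeast A · c) ⟨univ, h⟩
  refine ⟨X, hX.prop, ?_⟩
  obtain ⟨v, hv⟩ := hX.prop.1 hc
  have hv₁ : DicolorableOn A {v} 1 := dicolorableOn_of_injOn hA 0 (injOn_singleton _ _)
  have hXv := hX.not_prop_of_ssubset (sdiff_singleton_ssubset.2 hv)
  simp only [DichromaticAtLeast, not_and_or, Classical.not_imp, not_forall, not_not] at hXv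
  rcases hXv with ⟨-, hempty⟩ | ⟨k, hk, hk'⟩
  · rw [not_nonempty_iff_eq_empty, sdiff_eq_empty] at hempty
    exact (hv₁.subset hempty).mono (by omega)
  · exact ((hk'.union hv₁).subset (by simp)).mono hk

theorem DichromaticAtLeast.compl {X : Set V} {c₁ c₂ : ℕ}
    (h : DichromaticAtLeast A univ (c₁ + c₂)) (hX : DicolorableOn A X c₁) :
    DichromaticAtLeast A Xᶜ c₂ := by
  refine ⟨fun hc => ?_, fun k hk hk' => h.2 (c₁ + k) (by omega) ?_⟩
  · by_contra hXc
    rw [not_nonempty_iff_eq_empty, compl_empty_iff] at hXc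
    exact h.2 c₁ (by omega) (hXc ▸ hX)
  · exact (hX.union hk').subset (by simp)

theorem DichromaticAtLeast.exists_split [Finite V] (hA : ∀ v, ¬ A v v) {c₁ c₂ : ℕ}
    (h : DichromaticAtLeast A univ (c₁ + c₂)) :
    ∃ X, DichromaticAtLeast A X c₁ ∧ DichromaticAtLeast A Xᶜ c₂ := by
  rcases eq_or_ne c₁ 0 with rfl | hc₁
  · exact ⟨∅, ⟨fun h => absurd rfl h, fun k hk => absurd hk (Nat.not_lt_zero k)⟩, by simpa using h⟩
  · obtain ⟨X, hX, hXcol⟩ := (h.mono (Nat.le_add_right c₁ c₂)).exists_dicolorableOn hA hc₁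
    exact ⟨X, hX, h.compl hXcol⟩

theorem DichromaticAtLeast.not_dicolorableOn_subrel {s : Set V} {c : ℕ}
    (h : DichromaticAtLeast A s c) : ∀ k < c, ¬ DicolorableOn (Subrel A (· ∈ s)) univ k := by
  classical
  intro k hk hk'
  obtain ⟨x₀, hx₀⟩ := h.1 (by omega)
  refine h.2 k hk (hk'.comap_s6 (fun x => if hx : x ∈ s then ⟨x, hx⟩ else ⟨x₀, hx₀⟩)
    (fun x hx y hy hxy => ?_) (mapsTo_univ _ _) fun x hx y hy hxy => ?_)
  · simpa [hx, hy] using congrArg Subtype.val hxy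
  · simp only [hx, hy, dite_true]
    exact hxy

end DichromaticAtLeast

section Subdivision

variable {W W₁ W₂ V V₁ V₂ V' : Type} {B : W → W → Prop} {A : V → V → Prop}
  {A' : V' → V' → Prop}

theorem isChain_cons_append_singleton_map {α β : Type} {R : α → α → Prop} {S : β → β → Prop}
    (g : α → β) (hg : ∀ x y, R x y → S (g x) (g y)) {a b : α} {l : List α}
    (h : List.IsChain R (a :: (l ++ [b]))) : List.IsChain S (g a :: (l.map g ++ [g b])) := by
  simpa using List.isChain_map_of_isChain g hg h

theorem ContainsSubdivision.map (h : ContainsSubdivision B A) (g : V → V')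
    (hg : Function.Injective g) (hhom : ∀ x y, A x y → A' (g x) (g y)) :
    ContainsSubdivision B A' := by
  obtain ⟨f, p, hf, hchain, hnodup, hbranch, hdisj⟩ := h
  refine ⟨g ∘ f, fun u v => (p u v).map g, hg.comp hf, fun u v huv => ?_, fun u v huv => ?_,
    fun u v huv x hx w => ?_, fun u v u' v' huv hu'v' hne x hx hx' => ?_⟩
  · exact isChain_cons_append_singleton_map g hhom (hchain u v huv)
  · simpa using (hnodup u v huv).map hg
  · obtain ⟨y, hy, rfl⟩ := List.mem_map.mp hx
    exact fun hyw => hbranch u v huv y hy w (hg hyw)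
  · obtain ⟨y, hy, rfl⟩ := List.mem_map.mp hx
    exact hdisj u v u' v' huv hu'v' hne y hy ((List.mem_map_of_injective hg).mp hx')

theorem ContainsSubdivision.sum {B₁ : W₁ → W₁ → Prop} {B₂ : W₂ → W₂ → Prop}
    {A₁ : V₁ → V₁ → Prop} {A₂ : V₂ → V₂ → Prop}
    (h₁ : ContainsSubdivision B₁ A₁) (h₂ : ContainsSubdivision B₂ A₂) :
    ContainsSubdivision (sumRel B₁ B₂) (sumRel A₁ A₂) := by
  obtain ⟨f₁, p₁, hf₁, hchain₁, hnodup₁, hbranch₁, hdisj₁⟩ := h₁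
  obtain ⟨f₂, p₂, hf₂, hchain₂, hnodup₂, hbranch₂, hdisj₂⟩ := h₂
  let p : W₁ ⊕ W₂ → W₁ ⊕ W₂ → List (V₁ ⊕ V₂)
    | .inl a, .inl b => (p₁ a b).map .inl
    | .inr a, .inr b => (p₂ a b).map .inr
    | _, _ => []
  refine ⟨Sum.map f₁ f₂, p, hf₁.sumMap hf₂, ?_, ?_, ?_, ?_⟩
  · rintro (a | a) (b | b) h <;> simp only [sumRel] at h
    · exact isChain_cons_append_singleton_map Sum.inl (fun _ _ => id) (hchain₁ a b h)
    · exact isChain_cons_append_singleton_map Sum.inr (fun _ _ => id) (hchain₂ a b h)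
  · rintro (a | a) (b | b) h <;> simp only [sumRel] at h
    · simpa [p] using (hnodup₁ a b h).map Sum.inl_injective
    · simpa [p] using (hnodup₂ a b h).map Sum.inr_injective
  · rintro (a | a) (b | b) h x hx (w | w) <;> simp only [sumRel] at h <;>
      simp only [p, List.mem_map] at hx <;> obtain ⟨y, hy, rfl⟩ := hx
    · simpa using hbranch₁ a b h y hy w
    · simp
    · simp
    · simpa using hbranch₂ a b h y hy w
  · rintro (a | a) (b | b) (a' | a') (b' | b') h h' hne x hx hx' <;>
      simp only [sumRel] at h h' <;>
      simp only [p, List.mem_map] at hx hx' <;> obtain ⟨y, hy, rfl⟩ := hx <;>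
      obtain ⟨y', hy', hyy'⟩ := hx'
    · exact hdisj₁ a b a' b' h h' (by simpa using hne) y hy (Sum.inl_injective hyy' ▸ hy')
    · exact Sum.inr_ne_inl hyy'
    · exact Sum.inl_ne_inr hyy'
    · exact hdisj₂ a b a' b' h h' (by simpa using hne) y hy (Sum.inr_injective hyy' ▸ hy')

theorem IsMaderBound.containsSubdivision [Finite V] {c : ℕ} (hB : IsMaderBound B c)
    (hA : ∀ v, ¬ A v v) (h : ∀ k < c, ¬ DicolorableOn A univ k) : ContainsSubdivision B A := by
  obtain ⟨n, ⟨e⟩⟩ := Finite.exists_equiv_fin V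
  let A' : Fin n → Fin n → Prop := fun i j => A (e.symm i) (e.symm j)
  have hA' : ∀ i, ¬ A' i i := fun i => hA (e.symm i)
  have hc : c ≤ dichromaticNumber A' := by
    refine le_csInf ⟨n, dicolorableOn_of_injOn hA' id (injOn_id _)⟩ fun k hk => ?_
    refine not_lt.mp fun hkc => h k hkc (DicolorableOn.comap_s6 e e.injective.injOn
      (mapsTo_univ _ _) (fun x _ y _ hxy => ?_) hk)
    simpa [A'] using hxy
  exact (hB n A' hA' hc).map e.symm e.symm.injective fun _ _ => id

theorem ContainsSubdivision.sumRel_of_subrel_compl {B₁ : W₁ → W₁ → Prop}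
    {B₂ : W₂ → W₂ → Prop} {X : Set V} (h₁ : ContainsSubdivision B₁ (Subrel A (· ∈ X)))
    (h₂ : ContainsSubdivision B₂ (Subrel A (· ∈ Xᶜ))) : ContainsSubdivision (sumRel B₁ B₂) A := by
  classical
  refine (h₁.sum h₂).map (Equiv.Set.sumCompl X) (Equiv.Set.sumCompl X).injective ?_
  rintro (x | x) (y | y) hxy <;> simp only [sumRel] at hxy <;> exact hxy

end Subdivision

theorem IsMaderBound.sumRel {W₁ W₂ : Type} {B₁ : W₁ → W₁ → Prop} {B₂ : W₂ → W₂ → Prop}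
    {c₁ c₂ : ℕ} (h₁ : IsMaderBound B₁ c₁) (h₂ : IsMaderBound B₂ c₂) :
    IsMaderBound (sumRel B₁ B₂) (c₁ + c₂) := by
  intro n A hA hχ
  obtain ⟨X, hX, hXc⟩ := (dichromaticAtLeast_univ_of_le hχ).exists_split hA
  exact ContainsSubdivision.sumRel_of_subrel_compl
    (h₁.containsSubdivision (fun v => hA v.1) hX.not_dicolorableOn_subrel)
    (h₂.containsSubdivision (fun v => hA v.1) hXc.not_dicolorableOn_subrel)

/-- `mader_χ⃗(F₁ + F₂) ≤ mader_χ⃗(F₁) + mader_χ⃗(F₂)` for the disjoint union `F₁ + F₂`,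
assuming `mader_χ⃗(F₁)` and `mader_χ⃗(F₂)` are finite (i.e. some Mader bound exists). -/
theorem stmt6 {W₁ W₂ : Type} (B₁ : W₁ → W₁ → Prop) (B₂ : W₂ → W₂ → Prop)
    (h₁ : ∃ c, IsMaderBound B₁ c) (h₂ : ∃ c, IsMaderBound B₂ c) :
    maderChi (sumRel B₁ B₂) ≤ maderChi B₁ + maderChi B₂ := by
  have hc₁ : IsMaderBound B₁ (maderChi B₁) := Nat.sInf_mem h₁
  have hc₂ : IsMaderBound B₂ (maderChi B₂) := Nat.sInf_mem h₂
  exact Nat.sInf_le (hc₁.sumRel hc₂)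
end

section
/- Let k ≥ 2 and ℓ ≥ 1. Every digraph D with minimum out-degree δ⁺(D) ≥ k and digirth at least (k^ℓ − 1)/(k − 1) + 1 contains, for every chosen vertex u, a copy of S_k^{+(ℓ)} centred at u: k directed paths of length ℓ starting at u that are pairwise vertex-disjoint except at u. -/
/-- The digraph `A` contains a copy of `S_k^{+(ℓ)}` centred at `u`: `k` directed paths of
length `ℓ` starting at `u` (given by their lists of `ℓ` vertices after `u`), pairwise
vertex-disjoint except at `u`. -/
def HasOutStar {V : Type} (A : V → V → Prop) (k ℓ : ℕ) (u : V) : Prop :=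
  ∃ P : Fin k → List V,
    (∀ i, (P i).length = ℓ) ∧
    (∀ i, List.Chain A u (P i)) ∧
    (∀ i, (u :: P i).Nodup) ∧
    (∀ i j, i ≠ j → ∀ x ∈ P i, x ∉ P j)

/-!
Fix `k` out-neighbours `N v` of every vertex and let `S` be the set of vertices reached from `u`
by `N`-walks of length `< ℓ`. Then `|S| ≤ 1 + k + ⋯ + k^(ℓ-1) = (k^ℓ - 1)/(k - 1)`, so the girth
bound makes `S` acyclic. In an acyclic set in which every vertex has `k` out-neighbours, any
`k` start vertices can be linked out of the set by disjoint walks: remove a sink `t`, link out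
of the rest, and if a walk ends at `t` extend it by an out-neighbour of `t` that is not the end
of one of the other `k - 1` walks. Starting from the `k` out-neighbours of `u`, the walks
cannot leave `S` before `ℓ` steps, and their first `ℓ` vertices form the required paths.
-/

open Finset Relation

namespace List

variable {α : Type*} {R : α → α → Prop}

theorem IsChain.exists_rel_of_mem_dropLast {l : List α} (hl : IsChain R l) {x : α}
    (hx : x ∈ l.dropLast) : ∃ y, R x y := by
  induction l with
  | nil => simp at hx
  | cons a l ih =>
    cases l with
    | nil => simp at hx
    | cons b l =>
      rw [isChain_cons_cons] at hl
      rw [dropLast_cons_cons, mem_cons] at hx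
      rcases hx with rfl | hx
      · exact ⟨b, hl.1⟩
      · exact ih hl.2 hx

theorem exists_nodup_isChain_of_reflTransGen {a b : α} (h : ReflTransGen R a b) :
    ∃ l, IsChain R (a :: l) ∧ (a :: l).getLast (cons_ne_nil a l) = b ∧ (a :: l).Nodup := by
  induction h using ReflTransGen.head_induction_on with
  | refl => exact ⟨[], isChain_singleton b, rfl, nodup_singleton b⟩
  | @head a c hac _ ih =>
    obtain ⟨l, hch, hlast, hnd⟩ := ih
    by_cases ha : a ∈ c :: l
    · obtain ⟨s, t, hst⟩ := append_of_mem ha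
      refine ⟨t, hch.suffix (hst ▸ suffix_append s (a :: t)), ?_,
        hnd.sublist (hst ▸ sublist_append_right s (a :: t))⟩
      rw [← hlast]
      simp only [hst, getLast_append_of_ne_nil _ (cons_ne_nil a t)]
    · exact ⟨c :: l, hch.cons_cons hac, by simpa using hlast, nodup_cons.2 ⟨ha, hnd⟩⟩

end List

variable {V : Type}

def ArcFrom (N : V → Finset V) (S : Finset V) (x y : V) : Prop := x ∈ S ∧ y ∈ N x

theorem ArcFrom.mono {N : V → Finset V} {S T : Finset V} (hST : S ⊆ T) {x y : V}
    (h : ArcFrom N S x y) : ArcFrom N T x y :=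
  ⟨hST h.1, h.2⟩

def AcyclicOn (N : V → Finset V) (S : Finset V) : Prop := ∀ x, ¬ TransGen (ArcFrom N S) x x

namespace AcyclicOn

variable {N : V → Finset V} {S T : Finset V}

theorem mono (h : AcyclicOn N S) (hTS : T ⊆ S) : AcyclicOn N T :=
  fun x hx => h x (TransGen.mono (fun _ _ => ArcFrom.mono hTS) x x hx)

theorem nodup_of_isChain (h : AcyclicOn N S) {l : List V} (hl : List.IsChain (ArcFrom N S) l) :
    l.Nodup :=
  (List.isChain_iff_pairwise.1 (hl.imp fun _ _ => TransGen.single)).imp fun hxy => by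
    rintro rfl
    exact h _ hxy

theorem exists_sink (h : AcyclicOn N S) (hne : S.Nonempty) : ∃ t ∈ S, ∀ y ∈ N t, y ∉ S := by
  let below : S → S → Prop := fun a b => TransGen (ArcFrom N S) b a
  have : IsTrans S below := ⟨fun _ _ _ hab hbc => hbc.trans hab⟩
  have : Std.Irrefl below := ⟨fun a => h a⟩
  obtain ⟨t, -, ht⟩ := (Finite.wellFounded_of_trans_of_irrefl below).has_min Set.univ
    ⟨⟨_, hne.choose_spec⟩, trivial⟩
  exact ⟨t, t.2, fun y hy hyS => ht ⟨y, hyS⟩ trivial (TransGen.single ⟨t.2, hy⟩)⟩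

end AcyclicOn

theorem acyclicOn_of_card_lt_girth {A : V → V → Prop} {N : V → Finset V} {S : Finset V} {g : ℕ}
    (hNA : ∀ v, ∀ w ∈ N v, A v w)
    (hgirth : ∀ v l, IsCycleOn A Set.univ v l → g ≤ (v :: l).length) (hS : #S < g) :
    AcyclicOn N S := by
  classical
  intro x hx
  obtain ⟨b, hxb, hbx⟩ := TransGen.tail'_iff.1 hx
  obtain ⟨l, hch, hlast, hnd⟩ := List.exists_nodup_isChain_of_reflTransGen hxb
  have hcyc : List.IsChain (ArcFrom N S) (x :: l ++ [x]) :=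
    hch.append (List.isChain_singleton x) fun y hy z hz => by
      rw [List.getLast?_eq_some_getLast (List.cons_ne_nil x l), hlast, Option.mem_some_iff] at hy
      rw [List.head?_cons, Option.mem_some_iff] at hz
      exact hy ▸ hz ▸ hbx
  have hsub : (x :: l).toFinset ⊆ S := fun y hy => by
    obtain ⟨_, hyS, -⟩ := hcyc.exists_rel_of_mem_dropLast
      (by rw [List.dropLast_concat]; exact List.mem_toFinset.1 hy)
    exact hyS
  have hlen := hgirth x l ⟨fun _ _ => trivial, hnd, hcyc.imp fun a b hab => hNA a b hab.2⟩
  have := card_le_card hsub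
  rw [List.toFinset_card_of_nodup hnd] at this
  omega

def IsExitWalk (N : V → Finset V) (S : Finset V) (a : V) (w : List V) : Prop :=
  List.IsChain (ArcFrom N S) (a :: w) ∧ (a :: w).getLast (List.cons_ne_nil a w) ∉ S

namespace IsExitWalk

variable {N : V → Finset V} {S : Finset V} {a t : V} {w : List V}

theorem mem_or_eq_getLast (h : IsExitWalk N S a w) {x : V} (hx : x ∈ a :: w) :
    x ∈ S ∨ x = (a :: w).getLast (List.cons_ne_nil a w) := by
  by_cases hlast : x = (a :: w).getLast (List.cons_ne_nil a w)
  · exact .inr hlast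
  · obtain ⟨y, hxy, -⟩ :=
      h.1.exists_rel_of_mem_dropLast (List.mem_dropLast_of_mem_of_ne_getLast hx hlast)
    exact .inl hxy

variable [DecidableEq V]

theorem of_erase (h : IsExitWalk N (S.erase t) a w)
    (ht : (a :: w).getLast (List.cons_ne_nil a w) ≠ t) : IsExitWalk N S a w :=
  ⟨h.1.imp fun _ _ => ArcFrom.mono (erase_subset t S), fun hS => h.2 (mem_erase.2 ⟨ht, hS⟩)⟩

theorem concat_of_erase (h : IsExitWalk N (S.erase t) a w)
    (ht : (a :: w).getLast (List.cons_ne_nil a w) = t) (htS : t ∈ S) {y : V} (hy : y ∈ N t)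
    (hyS : y ∉ S) : IsExitWalk N S a (w ++ [y]) := by
  refine ⟨?_, by simpa using hyS⟩
  rw [← List.cons_append]
  refine (h.1.imp fun _ _ => ArcFrom.mono (erase_subset t S)).append
    (List.isChain_singleton y) ?_
  intro x hx z hz
  rw [List.getLast?_eq_some_getLast (List.cons_ne_nil a w), ht, Option.mem_some_iff] at hx
  rw [List.head?_cons, Option.mem_some_iff] at hz
  exact hx ▸ hz ▸ ⟨htS, hy⟩

end IsExitWalk

def IsExitLinkage {ι : Type*} (N : V → Finset V) (S : Finset V) (r : ι → V) (w : ι → List V) :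
    Prop :=
  (∀ i, IsExitWalk N S (r i) (w i)) ∧ Pairwise fun i j => (r i :: w i).Disjoint (r j :: w j)

namespace IsExitLinkage

variable {ι : Type*} {N : V → Finset V} {S : Finset V} {r : ι → V} {w : ι → List V} {t : V}

theorem of_empty (hr : Function.Injective r) : IsExitLinkage N ∅ r fun _ => [] :=
  ⟨fun _ => ⟨List.isChain_singleton _, Finset.notMem_empty _⟩,
    fun _ _ hij => by simpa using (hr.ne hij).symm⟩

variable [DecidableEq V]

theorem of_erase (h : IsExitLinkage N (S.erase t) r w)
    (ht : ∀ i, (r i :: w i).getLast (List.cons_ne_nil _ _) ≠ t) : IsExitLinkage N S r w :=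
  ⟨fun i => (h.1 i).of_erase (ht i), h.2⟩

theorem extend_of_erase [DecidableEq ι] (h : IsExitLinkage N (S.erase t) r w) {i₀ : ι}
    (hi₀ : (r i₀ :: w i₀).getLast (List.cons_ne_nil _ _) = t) (htS : t ∈ S) {y : V} (hy : y ∈ N t)
    (hyS : y ∉ S) (hyends : ∀ j ≠ i₀, (r j :: w j).getLast (List.cons_ne_nil _ _) ≠ y) :
    IsExitLinkage N S r (Function.update w i₀ (w i₀ ++ [y])) := by
  have hends : ∀ j ≠ i₀, (r j :: w j).getLast (List.cons_ne_nil _ _) ≠ t := fun j hj hjt =>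
    h.2 hj (hjt ▸ List.getLast_mem _) (hi₀ ▸ List.getLast_mem _)
  have hy_notMem : ∀ j ≠ i₀, y ∉ r j :: w j := fun j hj hyj =>
    ((h.1 j).mem_or_eq_getLast hyj).elim (fun hyS' => hyS (Finset.mem_of_mem_erase hyS'))
      fun hyl => hyends j hj hyl.symm
  have hdisj : ∀ j ≠ i₀, (r i₀ :: (w i₀ ++ [y])).Disjoint (r j :: w j) := fun j hj => by
    rw [← List.cons_append, List.disjoint_append_left, List.singleton_disjoint]
    exact ⟨h.2 hj.symm, hy_notMem j hj⟩
  refine ⟨fun i => ?_, fun i j hij => ?_⟩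
  · rcases eq_or_ne i i₀ with rfl | hi
    · simpa using (h.1 i).concat_of_erase hi₀ htS hy hyS
    · simpa [hi] using (h.1 i).of_erase (hends i hi)
  · rcases eq_or_ne i i₀ with rfl | hi
    · simpa [hij.symm] using hdisj j hij.symm
    rcases eq_or_ne j i₀ with rfl | hj
    · simpa [hi] using (hdisj i hi).symm
    · simpa [hi, hj] using h.2 hij

end IsExitLinkage

theorem AcyclicOn.exists_isExitLinkage [DecidableEq V] {N : V → Finset V} {S : Finset V}
    (hS : AcyclicOn N S) {k : ℕ} (hN : ∀ v ∈ S, k ≤ #(N v)) {ι : Type*} [Fintype ι]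
    (hι : Fintype.card ι ≤ k) {r : ι → V} (hr : Function.Injective r) :
    ∃ w, IsExitLinkage N S r w := by
  classical
  induction S using Finset.strongInduction with
  | H S ih =>
  obtain rfl | hne := S.eq_empty_or_nonempty
  · exact ⟨_, .of_empty hr⟩
  obtain ⟨t, htS, hsink⟩ := hS.exists_sink hne
  obtain ⟨w, hw⟩ := ih _ (erase_ssubset htS) (hS.mono (erase_subset t S))
    fun v hv => hN v (Finset.mem_of_mem_erase hv)
  let last : ι → V := fun i => (r i :: w i).getLast (List.cons_ne_nil _ _)
  by_cases hend : ∃ i₀, last i₀ = t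
  · obtain ⟨i₀, hi₀⟩ := hend
    -- the `card ι - 1` other walks block fewer than `k` out-neighbours of the sink `t`
    have hcard : #((univ.erase i₀).image last) < #(N t) := calc
      _ ≤ #(univ.erase i₀) := card_image_le
      _ < k := by
        have := Fintype.card_pos_iff.2 ⟨i₀⟩
        rw [card_erase_of_mem (mem_univ _), card_univ]
        omega
      _ ≤ #(N t) := hN t htS
    obtain ⟨y, hy, hyF⟩ := exists_mem_notMem_of_card_lt_card hcard
    refine ⟨_, hw.extend_of_erase hi₀ htS hy (hsink y hy) fun j hj hjy => hyF ?_⟩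
    exact mem_image.2 ⟨j, mem_erase.2 ⟨hj, mem_univ j⟩, hjy⟩
  · exact ⟨w, hw.of_erase fun i hi => hend ⟨i, hi⟩⟩

section OutLevel

variable [DecidableEq V] (N : V → Finset V) (u : V)

def outLevel : ℕ → Finset V
  | 0 => {u}
  | d + 1 => (outLevel d).biUnion N

variable {N u}

theorem card_outLevel_le {k : ℕ} (hN : ∀ v, #(N v) ≤ k) (d : ℕ) : #(outLevel N u d) ≤ k ^ d := by
  induction d with
  | zero => simp [outLevel]
  | succ d ih => calc
      #((outLevel N u d).biUnion N) ≤ #(outLevel N u d) * k :=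
        card_biUnion_le_card_mul _ _ _ fun v _ => hN v
      _ ≤ k ^ (d + 1) := by rw [pow_succ]; exact Nat.mul_le_mul_right k ih

theorem card_biUnion_outLevel_le {k : ℕ} (hN : ∀ v, #(N v) ≤ k) (ℓ : ℕ) :
    #((range ℓ).biUnion (outLevel N u)) ≤ ∑ d ∈ range ℓ, k ^ d :=
  card_biUnion_le.trans (sum_le_sum fun d _ => card_outLevel_le hN d)

theorem getLast_mem_outLevel {a : V} {l : List V} (hl : List.IsChain (fun x y => y ∈ N x) (a :: l))
    {d : ℕ} (ha : a ∈ outLevel N u d) :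
    (a :: l).getLast (List.cons_ne_nil a l) ∈ outLevel N u (d + l.length) := by
  induction l generalizing a d with
  | nil => simpa using ha
  | cons b l ih =>
    rw [List.isChain_cons_cons] at hl
    have hb : b ∈ outLevel N u (d + 1) := mem_biUnion.2 ⟨a, ha, hl.1⟩
    simpa [List.getLast_cons_cons, add_assoc, add_comm 1] using ih hl.2 hb

end OutLevel

theorem hasOutStar_of_acyclicOn_outLevels [DecidableEq V] {A : V → V → Prop}
    {N : V → Finset V} (hNA : ∀ v, ∀ w ∈ N v, A v w) {k ℓ : ℕ} (hN : ∀ v, k ≤ #(N v))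
    (hl : 1 ≤ ℓ) {u : V} (hS : AcyclicOn N ((range ℓ).biUnion (outLevel N u))) :
    HasOutStar A k ℓ u := by
  set S := (range ℓ).biUnion (outLevel N u)
  have huS : u ∈ S := mem_biUnion.2 ⟨0, mem_range.2 hl, mem_singleton_self u⟩
  obtain ⟨e⟩ : Nonempty (Fin k ↪ N u) :=
    Function.Embedding.nonempty_of_card_le (by simpa using hN u)
  let r (i : Fin k) : V := e i
  obtain ⟨w, hw, hdisj⟩ := hS.exists_isExitLinkage (fun v _ => hN v) (by simp)
    (r := r) (Subtype.val_injective.comp e.injective)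
  have hwalk (i : Fin k) : List.IsChain (ArcFrom N S) (u :: r i :: w i) :=
    (hw i).1.cons_cons ⟨huS, (e i).2⟩
  -- an exit walk leaves the levels `< ℓ` only after `ℓ` steps from `u`
  have hlen (i : Fin k) : ℓ ≤ (r i :: w i).length := by
    by_contra! h
    have := getLast_mem_outLevel ((hwalk i).imp fun _ _ h => h.2)
      (d := 0) (mem_singleton_self u)
    exact (hw i).2 (mem_biUnion.2 ⟨_, mem_range.2 (by simpa using h), by simpa using this⟩)
  refine ⟨fun i => (r i :: w i).take ℓ, fun i => List.length_take_of_le (hlen i),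
    fun i => ((hwalk i).take (ℓ + 1)).imp fun _ _ h => hNA _ _ h.2,
    fun i => (hS.nodup_of_isChain (hwalk i)).sublist ((List.take_sublist _ _).cons_cons u),
    fun i j hij x hx hx' => hdisj hij (List.take_subset _ _ hx) (List.take_subset _ _ hx')⟩

/-- Let `k ≥ 2` and `ℓ ≥ 1`. Every digraph with minimum out-degree at least `k` and
digirth at least `(k^ℓ - 1)/(k - 1) + 1` contains, for every chosen vertex `u`, a copy
of `S_k^{+(ℓ)}` centred at `u`. -/
theorem stmt14 (k ℓ : ℕ) (hk : 2 ≤ k) (hl : 1 ≤ ℓ)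
    {V : Type} [Fintype V] (A : V → V → Prop)
    (hdeg : ∀ v, k ≤ Nat.card {w // A v w})
    (hgirth : ∀ v l', IsCycleOn A Set.univ v l' →
      (k ^ ℓ - 1) / (k - 1) + 1 ≤ (v :: l').length) :
    ∀ u, HasOutStar A k ℓ u := by
  classical
  intro u
  have hout (v : V) : ∃ N ⊆ univ.filter (A v), #N = k :=
    exists_subset_card_eq (by simpa [Nat.card_eq_fintype_card, Fintype.card_subtype] using hdeg v)
  choose N hNsub hNk using hout
  have hNA : ∀ v, ∀ w ∈ N v, A v w := fun v w hw => (mem_filter.1 (hNsub v hw)).2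
  refine hasOutStar_of_acyclicOn_outLevels hNA (fun v => (hNk v).ge) hl
    (acyclicOn_of_card_lt_girth hNA hgirth ?_)
  calc #((range ℓ).biUnion (outLevel N u)) ≤ ∑ d ∈ range ℓ, k ^ d :=
        card_biUnion_outLevel_le (fun v => (hNk v).le) ℓ
    _ = (k ^ ℓ - 1) / (k - 1) := Nat.geomSum_eq hk ℓ
    _ < _ := lt_add_one _
end

section
/- Every subdivision of the bidirected triangle K↔_3 contains a directed cycle of even length. -/
/-- Every subdivision of the bidirected triangle `K↔_3` contains a directed cycle of even
length: any digraph containing a subdivision of `K↔_3` contains an even directed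
cycle. -/
theorem stmt19 {V : Type} (A : V → V → Prop)
    (h : ContainsSubdivision (fun u v : Fin 3 => u ≠ v) A) :
    ∃ (v : V) (l : List V), IsCycleOn A Set.univ v l ∧ Even ((v :: l).length) := by
  obtain ⟨f, p, hf, hchain, hnodup, hint, hdisj⟩ := h
  have hfnot : ∀ u v w : Fin 3, u ≠ v → f w ∉ p u v := by
    intro u v w huv hx
    exact hint u v huv _ hx w rfl
  have hpn : ∀ u v : Fin 3, u ≠ v → (p u v).Nodup := by
    intro u v huv
    have := (hnodup u v huv).of_cons
    exact (List.nodup_append.mp this).1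
  have hd : ∀ u v u' v' : Fin 3, u ≠ v → u' ≠ v' → (u,v) ≠ (u',v') →
      (p u v).Disjoint (p u' v') := by
    intro u v u' v' huv h2 h3 x hx
    exact hdisj u v u' v' huv h2 h3 x hx
  have key2 : ∀ u v : Fin 3, u ≠ v →
      IsCycleOn A Set.univ (f u) (p u v ++ f v :: p v u) := by
    intro u v huv
    refine ⟨fun x _ => Set.mem_univ x, ?_, ?_⟩
    · simp only [List.nodup_cons, List.mem_append, List.mem_cons, List.nodup_append,
        List.Disjoint, not_or]
      refine ⟨⟨hfnot u v u huv, hf.ne huv, hfnot v u u huv.symm⟩, hpn u v huv,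
        ⟨hfnot v u v huv.symm, hpn v u huv.symm⟩, ?_⟩
      rintro x hx b (rfl | hx') rfl
      · exact hint u v huv _ hx v rfl
      · exact hd u v v u huv huv.symm (fun e => huv (congrArg Prod.fst e)) hx hx'
    · rw [List.append_assoc, List.cons_append]
      unfold List.Chain
      rw [List.isChain_cons_split]
      exact ⟨hchain u v huv, hchain v u huv.symm⟩
  have key3 : ∀ u v w : Fin 3, u ≠ v → v ≠ w → u ≠ w →
      IsCycleOn A Set.univ (f u) (p u v ++ f v :: (p v w ++ f w :: p w u)) := by
    intro u v w huv hvw huw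
    refine ⟨fun x _ => Set.mem_univ x, ?_, ?_⟩
    · simp only [List.nodup_cons, List.mem_append, List.mem_cons, List.nodup_append,
        List.Disjoint, not_or]
      refine ⟨⟨hfnot u v u huv, hf.ne huv, hfnot v w u hvw, hf.ne huw, hfnot w u u huw.symm⟩,
        hpn u v huv,
        ⟨⟨hfnot v w v hvw, hf.ne hvw, hfnot w u v huw.symm⟩, hpn v w hvw,
          ⟨hfnot w u w huw.symm, hpn w u huw.symm⟩, ?_⟩, ?_⟩
      · rintro x hx b (rfl | hx') rfl
        · exact hint v w hvw _ hx w rfl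
        · exact hd v w w u hvw huw.symm (fun e => hvw (congrArg Prod.fst e)) hx hx'
      · rintro x hx b (rfl | hx' | rfl | hx') rfl
        · exact hint u v huv _ hx v rfl
        · exact hd u v v w huv hvw (fun e => huv (congrArg Prod.fst e)) hx hx'
        · exact hint u v huv _ hx w rfl
        · exact hd u v w u huv huw.symm (fun e => huw (congrArg Prod.fst e)) hx hx'
    · rw [List.append_assoc, List.cons_append]
      unfold List.Chain
      rw [List.isChain_cons_split]
      refine ⟨hchain u v huv, ?_⟩
      rw [List.append_assoc, List.cons_append, List.isChain_cons_split]
      exact ⟨hchain v w hvw, hchain w u huw.symm⟩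
  set a : Fin 3 → Fin 3 → ℕ := fun i j => (p i j).length with ha
  have len2 : ∀ u v : Fin 3, (f u :: (p u v ++ f v :: p v u)).length = 2 + a u v + a v u := by
    intro u v; simp [ha]; ring
  have len3 : ∀ u v w : Fin 3,
      (f u :: (p u v ++ f v :: (p v w ++ f w :: p w u))).length
        = 3 + a u v + a v w + a w u := by
    intro u v w; simp [ha]; ring
  by_cases h01 : (a 0 1 + a 1 0) % 2 = 0
  · exact ⟨_, _, key2 0 1 (by decide), by rw [len2, Nat.even_iff]; omega⟩
  by_cases h12 : (a 1 2 + a 2 1) % 2 = 0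
  · exact ⟨_, _, key2 1 2 (by decide), by rw [len2, Nat.even_iff]; omega⟩
  by_cases h02 : (a 0 2 + a 2 0) % 2 = 0
  · exact ⟨_, _, key2 0 2 (by decide), by rw [len2, Nat.even_iff]; omega⟩
  by_cases ht : (a 0 1 + a 1 2 + a 2 0) % 2 = 1
  · exact ⟨_, _, key3 0 1 2 (by decide) (by decide) (by decide),
      by rw [len3, Nat.even_iff]; omega⟩
  · refine ⟨_, _, key3 0 2 1 (by decide) (by decide) (by decide),
      by rw [len3, Nat.even_iff]; omega⟩
end
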